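/- arXiv:2511.08157 — 8 statements merged into one kernel-verified Lean document; each statement's English description precedes it below -/
import Mathlib

section
/- Let C be a weakly idempotent complete exact category and let C' be the full subcategory of objects X such that every morphism in C with target X is admissible (i.e., factors as a deflation followed by an inflation). Then C' is closed under extensions in C: for any conflation L ↣ M ↠ N with L, N ∈ C', also M ∈ C'. -/
open CategoryTheory Category Limits

universe v u

/-- A Quillen exact structure on an additive category, following Bühler: a class of
kernel-cokernel pairs (conflations), closed under isomorphisms, containing the identities,
with inflations and deflations closed under composition, and admitting pushouts of
inflations along arbitrary morphisms and pullbacks of deflations along arbitrary morphisms. -/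
structure ExactStructure (C : Type u) [Category.{v} C] [Preadditive C] [HasZeroObject C]
    [HasBinaryBiproducts C] where
  /-- the class of conflations (admissible exact sequences) -/
  IsConflation : ∀ {X Y Z : C}, (X ⟶ Y) → (Y ⟶ Z) → Prop
  comp_zero : ∀ {X Y Z : C} {f : X ⟶ Y} {g : Y ⟶ Z}, IsConflation f g → f ≫ g = 0
  isKernel : ∀ {X Y Z : C} {f : X ⟶ Y} {g : Y ⟶ Z}, IsConflation f g →
    ∀ {W : C} (k : W ⟶ Y), k ≫ g = 0 → ∃! l : W ⟶ X, l ≫ f = k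
  isCokernel : ∀ {X Y Z : C} {f : X ⟶ Y} {g : Y ⟶ Z}, IsConflation f g →
    ∀ {W : C} (k : Y ⟶ W), f ≫ k = 0 → ∃! l : Z ⟶ W, g ≫ l = k
  conflation_iso : ∀ {X Y Z X' Y' Z' : C} {f : X ⟶ Y} {g : Y ⟶ Z}
    (eX : X ≅ X') (eY : Y ≅ Y') (eZ : Z ≅ Z') {f' : X' ⟶ Y'} {g' : Y' ⟶ Z'},
    IsConflation f g → f ≫ eY.hom = eX.hom ≫ f' → g ≫ eZ.hom = eY.hom ≫ g' →
    IsConflation f' g'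
  id_inflation : ∀ X : C, ∃ (Z : C) (g : X ⟶ Z), IsConflation (𝟙 X) g
  id_deflation : ∀ X : C, ∃ (Z : C) (f : Z ⟶ X), IsConflation f (𝟙 X)
  inflation_comp : ∀ {X Y Z : C} (f : X ⟶ Y) (g : Y ⟶ Z),
    (∃ (W : C) (p : Y ⟶ W), IsConflation f p) →
    (∃ (W : C) (p : Z ⟶ W), IsConflation g p) →
    ∃ (W : C) (p : Z ⟶ W), IsConflation (f ≫ g) p
  deflation_comp : ∀ {X Y Z : C} (f : X ⟶ Y) (g : Y ⟶ Z),
    (∃ (W : C) (i : W ⟶ X), IsConflation i f) →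
    (∃ (W : C) (i : W ⟶ Y), IsConflation i g) →
    ∃ (W : C) (i : W ⟶ X), IsConflation i (f ≫ g)
  pushout_inflation : ∀ {X Y Z : C} (f : X ⟶ Y),
    (∃ (W : C) (p : Y ⟶ W), IsConflation f p) → ∀ (a : X ⟶ Z),
    ∃ (P : C) (a' : Y ⟶ P) (f' : Z ⟶ P), IsPushout f a a' f' ∧
      ∃ (W : C) (p : P ⟶ W), IsConflation f' p
  pullback_deflation : ∀ {X Y Z : C} (g : Y ⟶ Z),
    (∃ (W : C) (i : W ⟶ Y), IsConflation i g) → ∀ (a : X ⟶ Z),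
    ∃ (P : C) (a' : P ⟶ Y) (g' : P ⟶ X), IsPullback a' g' g a ∧
      ∃ (W : C) (i : W ⟶ P), IsConflation i g'

namespace ExactStructure

variable {C : Type u} [Category.{v} C] [Preadditive C] [HasZeroObject C]
  [HasBinaryBiproducts C] (E : ExactStructure C)

/-- A morphism is an inflation if it is the first map of a conflation. -/
def Inflation {X Y : C} (f : X ⟶ Y) : Prop := ∃ (Z : C) (g : Y ⟶ Z), E.IsConflation f g

/-- A morphism is a deflation if it is the second map of a conflation. -/
def Deflation {X Y : C} (f : X ⟶ Y) : Prop := ∃ (W : C) (g : W ⟶ X), E.IsConflation g f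

/-- A morphism is admissible if it factors as a deflation followed by an inflation. -/
def Admissible {X Y : C} (f : X ⟶ Y) : Prop :=
  ∃ (I : C) (p : X ⟶ I) (i : I ⟶ Y), E.Deflation p ∧ E.Inflation i ∧ p ≫ i = f

/-- The exact category is weakly idempotent complete: whenever `f ≫ g` is an inflation so
is `f`, and whenever `f ≫ g` is a deflation so is `g`. -/
def WeaklyIdempotentComplete : Prop :=
  (∀ {X Y Z : C} (f : X ⟶ Y) (g : Y ⟶ Z), E.Inflation (f ≫ g) → E.Inflation f) ∧
  (∀ {X Y Z : C} (f : X ⟶ Y) (g : Y ⟶ Z), E.Deflation (f ≫ g) → E.Deflation g)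

/-- Membership in the full subcategory `C'` of objects `X` such that every morphism of `C`
with target `X` is admissible. -/
def GoodTarget (X : C) : Prop := ∀ ⦃A : C⦄ (f : A ⟶ X), E.Admissible f

end ExactStructure

variable {C : Type u} [Category.{v} C] [Preadditive C] [HasZeroObject C]
  [HasBinaryBiproducts C]

/-! ### Auxiliary lemmas -/

/-- Constructor for `IsPullback` from an explicit universal property. -/
lemma isPullback_mk {P X Y Z : C} {fst : P ⟶ X} {snd : P ⟶ Y} {f : X ⟶ Z} {g : Y ⟶ Z}
    (w : fst ≫ f = snd ≫ g)
    (lift : ∀ {T : C} (h : T ⟶ X) (k : T ⟶ Y), h ≫ f = k ≫ g → (T ⟶ P))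
    (lift_fst : ∀ {T : C} (h : T ⟶ X) (k : T ⟶ Y) (hw : h ≫ f = k ≫ g),
      lift h k hw ≫ fst = h)
    (lift_snd : ∀ {T : C} (h : T ⟶ X) (k : T ⟶ Y) (hw : h ≫ f = k ≫ g),
      lift h k hw ≫ snd = k)
    (uniq : ∀ {T : C} (m m' : T ⟶ P), m ≫ fst = m' ≫ fst → m ≫ snd = m' ≫ snd → m = m') :
    IsPullback fst snd f g :=
  IsPullback.of_isLimit (PullbackCone.IsLimit.mk w
    (fun s => lift s.fst s.snd s.condition)
    (fun s => lift_fst _ _ _)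
    (fun s => lift_snd _ _ _)
    (fun s m h1 h2 => uniq m _ (by rw [h1, lift_fst]) (by rw [h2, lift_snd])))

namespace ExactStructure

variable (E : ExactStructure C)

/-- The first map of a conflation is a monomorphism. -/
lemma mono_of_conflation {X Y Z : C} {f : X ⟶ Y} {g : Y ⟶ Z}
    (h : E.IsConflation f g) : Mono f := by
  constructor
  intro W u v huv
  have h0 : (u ≫ f) ≫ g = 0 := by rw [assoc, E.comp_zero h, Limits.comp_zero]
  obtain ⟨l, -, hl⟩ := E.isKernel h (u ≫ f) h0
  rw [hl u rfl, hl v huv.symm]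

/-- Transport a conflation along another kernel of the same deflation. -/
lemma conflation_of_isKernel {K Y Z X : C} {k : K ⟶ Y} {p : Y ⟶ Z}
    (hc : E.IsConflation k p) {m : X ⟶ Y} (hm : m ≫ p = 0)
    (huniv : ∀ {W : C} (w : W ⟶ Y), w ≫ p = 0 → ∃! l : W ⟶ X, l ≫ m = w) :
    E.IsConflation m p := by
  have hmono : Mono m := by
    constructor
    intro W x y hxy
    have h0 : (x ≫ m) ≫ p = 0 := by rw [assoc, hm, Limits.comp_zero]
    obtain ⟨l, -, hl⟩ := huniv (x ≫ m) h0
    rw [hl x rfl, hl y hxy.symm]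
  have hkmono : Mono k := E.mono_of_conflation hc
  obtain ⟨u, hu, -⟩ := huniv k (E.comp_zero hc)
  obtain ⟨v, hv, -⟩ := E.isKernel hc m hm
  have h1 : u ≫ v = 𝟙 K := by
    rw [← cancel_mono k]; rw [assoc, hv, hu, id_comp]
  have h2 : v ≫ u = 𝟙 X := by
    rw [← cancel_mono m]; rw [assoc, hu, hv, id_comp]
  exact E.conflation_iso (Iso.mk u v h1 h2) (Iso.refl Y) (Iso.refl Z)
    (f' := m) (g' := p) hc (by simpa using hu.symm) (by simp)

/-- The `hom` of any isomorphism is a deflation. -/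
lemma deflation_of_iso {X Y : C} (e : X ≅ Y) : E.Deflation e.hom := by
  obtain ⟨Z, f0, hf0⟩ := E.id_deflation X
  exact ⟨Z, f0, E.conflation_iso (Iso.refl Z) (Iso.refl X) e
    (f' := f0) (g' := e.hom) hf0 (by simp) (by simp)⟩

/-- In any pullback square in which one leg of the cospan is a deflation, the opposite side
of the square is a deflation. -/
lemma deflation_of_isPullback {P' X Y Z : C} {a' : P' ⟶ Y} {g' : P' ⟶ X}
    {g : Y ⟶ Z} {a : X ⟶ Z} (hpb : IsPullback a' g' g a) (hg : E.Deflation g) :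
    E.Deflation g' := by
  obtain ⟨Q, b', h', hpb', hdefl⟩ := E.pullback_deflation g hg a
  have he : g' = (hpb.isoIsPullback _ _ hpb').hom ≫ h' := by
    rw [IsPullback.isoIsPullback_hom_snd]
  rw [he]
  exact E.deflation_comp _ _ (E.deflation_of_iso _) hdefl

/-- The second projection of a binary biproduct is a deflation. -/
lemma snd_deflation (A L : C) : E.Deflation (biprod.snd : A ⊞ L ⟶ L) := by
  obtain ⟨Z, gA, hA⟩ := E.id_inflation A
  have hgA : gA = 0 := by simpa using E.comp_zero hA
  have hpb : IsPullback (biprod.fst : A ⊞ L ⟶ A) biprod.snd gA (0 : L ⟶ Z) := by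
    refine isPullback_mk (by rw [hgA, Limits.comp_zero, Limits.comp_zero])
      (fun h k _ => biprod.lift h k) (fun h k _ => biprod.lift_fst _ _)
      (fun h k _ => biprod.lift_snd _ _) (fun m m' h1 h2 => ?_)
    exact biprod.hom_ext _ _ h1 h2
  exact E.deflation_of_isPullback hpb ⟨A, 𝟙 A, hA⟩

/-- Key step: if `L ↣ P ↠ I` is a conflation, `L` is a good target, and `t : A ⟶ P` is such
that `t ≫ g'` is a deflation, then `t` is admissible. -/
lemma admissible_of_comp_deflation (hwic : E.WeaklyIdempotentComplete)
    {L P I : C} {fb : L ⟶ P} {g' : P ⟶ I} (hc : E.IsConflation fb g')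
    (hL : E.GoodTarget L) {A : C} (t : A ⟶ P) (hd : E.Deflation (t ≫ g')) :
    E.Admissible t := by
  have hfbg : fb ≫ g' = 0 := E.comp_zero hc
  have hfbmono : Mono fb := E.mono_of_conflation hc
  -- pull the deflation `t ≫ g'` back along `g'`
  obtain ⟨R, πA, πP, hpbR, hπP⟩ := E.pullback_deflation (t ≫ g') hd g'
  have hπA : E.Deflation πA := E.deflation_of_isPullback hpbR.flip ⟨L, fb, hc⟩
  have hσw : (𝟙 A) ≫ (t ≫ g') = t ≫ g' := by rw [id_comp]
  have hlw : (0 : L ⟶ A) ≫ (t ≫ g') = fb ≫ g' := by rw [zero_comp, hfbg]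
  set σ : A ⟶ R := hpbR.lift (𝟙 A) t hσw with hσdef
  have hσA : σ ≫ πA = 𝟙 A := hpbR.lift_fst _ _ _
  have hσP : σ ≫ πP = t := hpbR.lift_snd _ _ _
  set l : L ⟶ R := hpbR.lift 0 fb hlw with hldef
  have hlA : l ≫ πA = 0 := hpbR.lift_fst _ _ _
  have hlP : l ≫ πP = fb := hpbR.lift_snd _ _ _
  have hlmono : Mono l := by
    have : Mono (l ≫ πP) := by rw [hlP]; exact hfbmono
    exact mono_of_mono l πP
  -- `L ↣ R ↠ A` is a conflation
  obtain ⟨K1, k1, hk1⟩ := hπA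
  have hconfl : E.IsConflation l πA := by
    refine E.conflation_of_isKernel hk1 hlA ?_
    intro T w hw
    have h1 : (w ≫ πP) ≫ g' = 0 := by
      rw [assoc, ← hpbR.w, ← assoc, hw, zero_comp]
    obtain ⟨v, hv, hvuniq⟩ := E.isKernel hc (w ≫ πP) h1
    refine ⟨v, ?_, ?_⟩
    · apply hpbR.hom_ext
      · rw [assoc, hlA, Limits.comp_zero, hw]
      · rw [assoc, hlP, hv]
    · intro v' hv'
      apply hvuniq
      rw [← hlP, ← assoc, hv']
  -- the splitting of `πA` induced by `σ`
  have hρ0 : (𝟙 R - πA ≫ σ) ≫ πA = 0 := by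
    rw [Preadditive.sub_comp, id_comp, assoc, hσA, comp_id, sub_self]
  obtain ⟨ρ, hρ, -⟩ := E.isKernel hconfl (𝟙 R - πA ≫ σ) hρ0
  have hσρ : σ ≫ ρ = 0 := by
    rw [← cancel_mono l, assoc, hρ, Preadditive.comp_sub, comp_id, ← assoc, hσA,
      id_comp, sub_self, zero_comp]
  have hlρ : l ≫ ρ = 𝟙 L := by
    rw [← cancel_mono l, assoc, hρ, Preadditive.comp_sub, comp_id, ← assoc, hlA,
      zero_comp, sub_zero, id_comp]
  -- the iso `A ⊞ L ≅ R`
  have hφψ : biprod.desc σ l ≫ biprod.lift πA ρ = 𝟙 (A ⊞ L) := by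
    apply biprod.hom_ext' <;> apply biprod.hom_ext <;>
      simp [hσA, hσρ, hlA, hlρ]
  have hψφ : biprod.lift πA ρ ≫ biprod.desc σ l = 𝟙 R := by
    rw [biprod.lift_desc, hρ]; abel
  have hs_eq : biprod.desc t fb = (Iso.mk (biprod.desc σ l) (biprod.lift πA ρ) hφψ hψφ).hom ≫ πP := by
    apply biprod.hom_ext' <;> simp [hσP, hlP]
  -- `s = (t, fb) : A ⊞ L ⟶ P` is a deflation
  have hs : E.Deflation (biprod.desc t fb) := by
    rw [hs_eq]
    exact E.deflation_comp _ _ (E.deflation_of_iso _) hπP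
  obtain ⟨K, k, hks⟩ := id hs
  have hk0 : k ≫ biprod.desc t fb = 0 := E.comp_zero hks
  -- the morphism `K ⟶ L` is admissible since `L` is a good target
  obtain ⟨J, e, j, he, hj, hej⟩ := hL (k ≫ biprod.snd)
  obtain ⟨L₁, c₀, hjc⟩ := hj
  have hjmono : Mono j := E.mono_of_conflation hjc
  -- the quotient `q : P ⟶ L₁`
  have hkc : k ≫ (biprod.snd ≫ c₀) = 0 := by
    rw [← assoc, ← hej, assoc, E.comp_zero hjc, Limits.comp_zero]
  obtain ⟨q, hq, -⟩ := E.isCokernel hks (biprod.snd ≫ c₀) hkc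
  have hqd : E.Deflation q := by
    refine hwic.2 (biprod.desc t fb) q ?_
    rw [hq]
    exact E.deflation_comp _ _ (E.snd_deflation A L) ⟨J, j, hjc⟩
  obtain ⟨W, i, hiq⟩ := hqd
  have himono : Mono i := E.mono_of_conflation hiq
  -- `t` factors through the kernel `W` of `q`
  have htq : t ≫ q = 0 := by
    have h1 : biprod.inl ≫ biprod.desc t fb = t := biprod.inl_desc _ _
    rw [← h1, assoc, hq, ← assoc, biprod.inl_snd, zero_comp]
  obtain ⟨p, hp, -⟩ := E.isKernel hiq t htq
  have hfbq : fb ≫ q = c₀ := by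
    have h1 : biprod.inr ≫ biprod.desc t fb = fb := biprod.inr_desc _ _
    rw [← h1, assoc, hq, ← assoc, biprod.inr_snd, id_comp]
  obtain ⟨r, hr, -⟩ := E.isKernel hiq (j ≫ fb)
    (by rw [assoc, hfbq, E.comp_zero hjc])
  -- the key identity
  have hkey : (k ≫ biprod.fst) ≫ p + e ≫ r = 0 := by
    have h3 : biprod.fst ≫ t + biprod.snd ≫ fb = biprod.desc t fb := by
      apply biprod.hom_ext' <;> simp
    rw [← cancel_mono i]
    simp only [Preadditive.add_comp, assoc, hp, hr, zero_comp]
    rw [← assoc e j, hej, assoc, ← Preadditive.comp_add, h3, hk0]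
  -- the pullback square exhibiting `s' = (p, r)` as a pullback of `s` along `i`
  have hsq : biprod.map (𝟙 A) j ≫ biprod.desc t fb = biprod.desc p r ≫ i := by
    apply biprod.hom_ext'
    · rw [← assoc, biprod.inl_map, id_comp, biprod.inl_desc, ← assoc, biprod.inl_desc, hp]
    · rw [← assoc, biprod.inr_map, assoc, biprod.inr_desc, ← assoc, biprod.inr_desc, hr]
  have key : ∀ {T : C} (β : T ⟶ A ⊞ L) (α : T ⟶ W), β ≫ biprod.desc t fb = α ≫ i →
      ∃ γ : T ⟶ A ⊞ J, γ ≫ biprod.map (𝟙 A) j = β ∧ γ ≫ biprod.desc p r = α := by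
    intro T β α hw
    have h0 : (β ≫ biprod.snd) ≫ c₀ = 0 := by
      rw [assoc, ← hq, ← assoc, hw, assoc, E.comp_zero hiq, Limits.comp_zero]
    obtain ⟨u, hu, -⟩ := E.isKernel hjc (β ≫ biprod.snd) h0
    refine ⟨biprod.lift (β ≫ biprod.fst) u, ?_, ?_⟩
    · apply biprod.hom_ext
      · rw [assoc, biprod.map_fst, ← assoc, biprod.lift_fst, comp_id]
      · rw [assoc, biprod.map_snd, ← assoc, biprod.lift_snd, hu]
    · rw [← cancel_mono i, assoc, ← hsq, ← assoc]
      have : biprod.lift (β ≫ biprod.fst) u ≫ biprod.map (𝟙 A) j = β := by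
        apply biprod.hom_ext
        · rw [assoc, biprod.map_fst, ← assoc, biprod.lift_fst, comp_id]
        · rw [assoc, biprod.map_snd, ← assoc, biprod.lift_snd, hu]
      rw [this, hw]
  have huniq : ∀ {T : C} (m m' : T ⟶ A ⊞ J),
      m ≫ biprod.map (𝟙 A) j = m' ≫ biprod.map (𝟙 A) j → m = m' := by
    intro T m m' h1
    apply biprod.hom_ext
    · have := congrArg (fun x => x ≫ biprod.fst) h1
      simpa [biprod.map_fst] using this
    · have := congrArg (fun x => x ≫ biprod.snd) h1
      simp only [assoc, biprod.map_snd] at this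
      rw [← assoc, ← assoc] at this
      exact (cancel_mono j).1 this
  have hpb2 : IsPullback (biprod.map (𝟙 A) j) (biprod.desc p r) (biprod.desc t fb) i :=
    isPullback_mk hsq (fun β α hw => (key β α hw).choose)
      (fun β α hw => (key β α hw).choose_spec.1)
      (fun β α hw => (key β α hw).choose_spec.2)
      (fun m m' h1 _ => huniq m m' h1)
  have hs' : E.Deflation (biprod.desc p r) := E.deflation_of_isPullback hpb2 hs
  -- `𝟙 A ⊞ e` is a deflation
  have hpb3 : IsPullback (biprod.snd : A ⊞ K ⟶ K) (biprod.map (𝟙 A) e) e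
      (biprod.snd : A ⊞ J ⟶ J) := by
    refine isPullback_mk (biprod.map_snd _ _).symm
      (fun h k' hw => biprod.lift (k' ≫ biprod.fst) h)
      (fun h k' hw => biprod.lift_snd _ _) (fun h k' hw => ?_) ?_
    · apply biprod.hom_ext
      · rw [assoc, biprod.map_fst, ← assoc, biprod.lift_fst, comp_id]
      · rw [assoc, biprod.map_snd, ← assoc, biprod.lift_snd, hw]
    · intro T m m' h1 h2
      apply biprod.hom_ext
      · have := congrArg (fun x => x ≫ biprod.fst) h2
        simpa [biprod.map_fst] using this
      · exact h1
  have hmape : E.Deflation (biprod.map (𝟙 A) e) := E.deflation_of_isPullback hpb3 he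
  -- conclude that `p` is a deflation
  have heq : biprod.map (𝟙 A) e ≫ biprod.desc p r = biprod.desc (𝟙 A) (-(k ≫ biprod.fst)) ≫ p := by
    apply biprod.hom_ext'
    · rw [← assoc, biprod.inl_map, id_comp, biprod.inl_desc, ← assoc, biprod.inl_desc, id_comp]
    · rw [← assoc, biprod.inr_map, assoc, biprod.inr_desc, ← assoc, biprod.inr_desc,
        Preadditive.neg_comp]
      exact eq_neg_of_add_eq_zero_right hkey
  have hpdefl : E.Deflation p := by
    refine hwic.2 (biprod.desc (𝟙 A) (-(k ≫ biprod.fst))) p ?_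
    rw [← heq]
    exact E.deflation_comp _ _ hmape hs'
  exact ⟨W, p, i, hpdefl, ⟨L₁, q, hiq⟩, hp⟩

end ExactStructure

/-- **(Proposition, extension-closure of `C'`.)** Let `C` be a weakly idempotent complete
exact category and `C'` the full subcategory of objects `X` such that every morphism of
`C` with target `X` is admissible. Then `C'` is closed under extensions: for any
conflation `L ↣ M ↠ N` with `L, N ∈ C'`, also `M ∈ C'`. -/
theorem goodTarget_closed_under_extensions (E : ExactStructure C)
    (hwic : E.WeaklyIdempotentComplete)
    {L M N : C} (f : L ⟶ M) (g : M ⟶ N) (hc : E.IsConflation f g)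
    (hL : E.GoodTarget L) (hN : E.GoodTarget N) :
    E.GoodTarget M := by
  intro A a
  -- `a ≫ g` is admissible since `N` is a good target
  obtain ⟨I, d, m, hd, hm, hdm⟩ := hN (a ≫ g)
  obtain ⟨Q, qN, hmq⟩ := hm
  have hmmono : Mono m := E.mono_of_conflation hmq
  -- pull back `g` along `m`
  obtain ⟨P, m', g', hpb, hg'⟩ := E.pullback_deflation g ⟨L, f, hc⟩ m
  have hg'defl : E.Deflation g' := hg'
  -- the kernel of `g'` is `L`
  have hf0 : f ≫ g = (0 : L ⟶ I) ≫ m := by rw [E.comp_zero hc, zero_comp]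
  set fb : L ⟶ P := hpb.lift f 0 hf0 with hfbdef
  have hfbm : fb ≫ m' = f := hpb.lift_fst _ _ _
  have hfbg : fb ≫ g' = 0 := hpb.lift_snd _ _ _
  obtain ⟨W0, k0, hk0⟩ := hg'defl
  have hcP : E.IsConflation fb g' := by
    refine E.conflation_of_isKernel hk0 hfbg ?_
    intro T w hw
    have h1 : (w ≫ m') ≫ g = 0 := by
      rw [assoc, hpb.w, ← assoc, hw, zero_comp]
    obtain ⟨u, hu, huniq⟩ := E.isKernel hc (w ≫ m') h1
    refine ⟨u, ?_, ?_⟩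
    · apply hpb.hom_ext
      · rw [assoc, hfbm, hu]
      · rw [assoc, hfbg, Limits.comp_zero, hw]
    · intro v hv
      apply huniq
      rw [← hfbm, ← assoc, hv]
  -- `m'` is an inflation, being the kernel of the deflation `g ≫ qN`
  have hgq : E.Deflation (g ≫ qN) := E.deflation_comp g qN ⟨L, f, hc⟩ ⟨I, m, hmq⟩
  obtain ⟨W1, k1, hk1⟩ := hgq
  have hm'g : m' ≫ (g ≫ qN) = 0 := by
    rw [← assoc, hpb.w, assoc, E.comp_zero hmq, Limits.comp_zero]
  have hcm' : E.IsConflation m' (g ≫ qN) := by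
    refine E.conflation_of_isKernel hk1 hm'g ?_
    intro T w hw
    have h1 : (w ≫ g) ≫ qN = 0 := by rw [assoc]; exact hw
    obtain ⟨u, hu, -⟩ := E.isKernel hmq (w ≫ g) h1
    refine ⟨hpb.lift w u hu.symm, hpb.lift_fst _ _ _, ?_⟩
    intro v hv
    apply hpb.hom_ext
    · rw [hpb.lift_fst, hv]
    · rw [hpb.lift_snd, ← cancel_mono m, hu, assoc, ← hpb.w, ← assoc, hv]
  have hm'infl : E.Inflation m' := ⟨Q, g ≫ qN, hcm'⟩
  -- lift `a` to the pullback
  set t : A ⟶ P := hpb.lift a d hdm.symm with htdef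
  have htm : t ≫ m' = a := hpb.lift_fst _ _ _
  have htg : t ≫ g' = d := hpb.lift_snd _ _ _
  have hdt : E.Deflation (t ≫ g') := by rw [htg]; exact hd
  -- apply the key lemma
  obtain ⟨I2, p, i, hp, hi, hpi⟩ := E.admissible_of_comp_deflation hwic hcP hL t hdt
  exact ⟨I2, p, i ≫ m', hp, E.inflation_comp i m' hi hm'infl, by rw [← assoc, hpi, htm]⟩
end

section
/- Let C be a weakly idempotent complete exact category and let C' be the full subcategory of objects X such that every morphism in C with target X is admissible. Then C' is closed under subobjects: if Y ∈ C' and f : X ↣ Y is an inflation in C, then X ∈ C'. -/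
open CategoryTheory Category Limits

universe v u

variable {C : Type u} [Category.{v} C] [Preadditive C] [HasZeroObject C]
  [HasBinaryBiproducts C]

/-- **(Proposition, `C'` closed under subobjects.)** Let `C` be a weakly idempotent
complete exact category and `C'` the full subcategory of objects `X` such that every
morphism of `C` with target `X` is admissible. If `Y ∈ C'` and `f : X ↣ Y` is an
inflation, then `X ∈ C'`. -/
theorem goodTarget_closed_under_subobjects (E : ExactStructure C)
    (hwic : E.WeaklyIdempotentComplete)
    {X Y : C} (f : X ⟶ Y) (hf : E.Inflation f) (hY : E.GoodTarget Y) :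
    E.GoodTarget X := by
  intro A g
  obtain ⟨Z, q, hconf⟩ := hf
  obtain ⟨I, p, i, ⟨K, k, hkp⟩, hi, hfac⟩ := hY (g ≫ f)
  -- p is epi
  have hepi : ∀ {W : C} (a b : I ⟶ W), p ≫ a = p ≫ b → a = b := by
    intro W a b hab
    have h0 : k ≫ (p ≫ a) = 0 := by
      rw [reassoc_of% (E.comp_zero hkp), zero_comp]
    obtain ⟨l, -, hl⟩ := E.isCokernel hkp (p ≫ a) h0
    exact (hl a rfl).trans (hl b hab.symm).symm
  -- f is mono
  have hmono : ∀ {W : C} (a b : W ⟶ X), a ≫ f = b ≫ f → a = b := by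
    intro W a b hab
    have h0 : (a ≫ f) ≫ q = 0 := by
      rw [assoc, E.comp_zero hconf, comp_zero]
    obtain ⟨l, -, hl⟩ := E.isKernel hconf (a ≫ f) h0
    exact (hl a rfl).trans (hl b hab.symm).symm
  -- i ≫ q = 0
  have hiq : i ≫ q = 0 := by
    apply hepi
    rw [comp_zero, ← assoc, hfac, assoc, E.comp_zero hconf, comp_zero]
  obtain ⟨j, hj, -⟩ := E.isKernel hconf i hiq
  have hg : g = p ≫ j := by
    apply hmono
    rw [assoc, hj, hfac]
  have hjinf : E.Inflation j := (hwic.1 j f (by rw [hj]; exact hi))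
  exact ⟨I, p, j, ⟨K, k, hkp⟩, hjinf, hg.symm⟩
end

section
/- Let C be a weakly idempotent complete exact category and let C' be the full subcategory of objects X such that every morphism in C with target X is admissible. Then C' is closed under quotients: if X ∈ C' and p : X ↠ Y is a deflation in C, then Y ∈ C'. -/
open CategoryTheory Category Limits

universe v u

variable {C : Type u} [Category.{v} C] [Preadditive C] [HasZeroObject C]
  [HasBinaryBiproducts C]

lemma ExactStructure.mono_of_conflation_s2 (E : ExactStructure C) {X Y Z : C} {f : X ⟶ Y}
    {g : Y ⟶ Z} (h : E.IsConflation f g) : Mono f := by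
  constructor
  intro W a b hab
  obtain ⟨l, -, hl⟩ := E.isKernel h (b ≫ f)
    (by rw [Category.assoc, E.comp_zero h, Limits.comp_zero])
  rw [hl a hab, hl b rfl]

lemma ExactStructure.epi_of_conflation (E : ExactStructure C) {X Y Z : C} {f : X ⟶ Y}
    {g : Y ⟶ Z} (h : E.IsConflation f g) : Epi g := by
  constructor
  intro W a b hab
  obtain ⟨l, -, hl⟩ := E.isCokernel h (g ≫ b)
    (by rw [← Category.assoc, E.comp_zero h, zero_comp])
  rw [hl a hab, hl b rfl]

/-- **(Proposition, `C'` closed under quotients.)** Let `C` be a weakly idempotent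
complete exact category and `C'` the full subcategory of objects `X` such that every
morphism of `C` with target `X` is admissible. If `X ∈ C'` and `p : X ↠ Y` is a
deflation, then `Y ∈ C'`. -/
theorem goodTarget_closed_under_quotients (E : ExactStructure C)
    (hwic : E.WeaklyIdempotentComplete)
    {X Y : C} (p : X ⟶ Y) (hp : E.Deflation p) (hX : E.GoodTarget X) :
    E.GoodTarget Y := by
  obtain ⟨N, n, hnp⟩ := hp
  intro A f
  have hn0 : n ≫ p = 0 := E.comp_zero hnp
  have hmono_n : Mono n := E.mono_of_conflation_s2 hnp
  -- pull back `p` along `f`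
  obtain ⟨P, r, q, hPB, Kq, kq, hkq⟩ := E.pullback_deflation p ⟨N, n, hnp⟩ f
  have hmono_kq : Mono kq := E.mono_of_conflation_s2 hkq
  -- kernel comparison: `N` is also a kernel of `q`
  set ψ : N ⟶ P := hPB.lift n 0 (by rw [hn0, zero_comp]) with hψdef
  have hψr : ψ ≫ r = n := hPB.lift_fst n 0 _
  have hψq : ψ ≫ q = 0 := hPB.lift_snd n 0 _
  obtain ⟨z, hz, -⟩ := E.isKernel hnp (kq ≫ r)
    (by rw [Category.assoc, hPB.w, ← Category.assoc, E.comp_zero hkq, zero_comp])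
  obtain ⟨χ, hχ, -⟩ := E.isKernel hkq ψ hψq
  have hzψ : z ≫ ψ = kq := by
    apply hPB.hom_ext
    · rw [Category.assoc, hψr, hz]
    · rw [Category.assoc, hψq, comp_zero, E.comp_zero hkq]
  have hzχ : z ≫ χ = 𝟙 _ := by
    rw [← cancel_mono kq, Category.assoc, hχ, hzψ, Category.id_comp]
  have hχz : χ ≫ z = 𝟙 _ := by
    rw [← cancel_mono n, Category.assoc, hz, ← Category.assoc, hχ, hψr, Category.id_comp]
  have hψconf : E.IsConflation ψ q :=
    E.conflation_iso (Iso.mk z χ hzχ hχz) (Iso.refl P) (Iso.refl A) hkq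
      (by simp [hzψ]) (by simp)
  -- factor `r : P ⟶ X` using the hypothesis on `X`
  obtain ⟨I, d, i, hd, hi, hdi⟩ := hX r
  obtain ⟨Co, c, hic⟩ := hi
  have hmono_i : Mono i := E.mono_of_conflation_s2 hic
  have hn' : (ψ ≫ d) ≫ i = n := by rw [Category.assoc, hdi, hψr]
  -- `ψ ≫ d : N ⟶ I` is an inflation
  have htiI : E.Inflation ((ψ ≫ d) ≫ i) := by
    have hh : (ψ ≫ d) ≫ i = n := by rw [Category.assoc, hdi, hψr]
    rw [hh]; exact ⟨Y, p, hnp⟩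
  obtain ⟨J, u, htu⟩ := hwic.1 _ _ htiI
  have hu_epi : Epi u := E.epi_of_conflation htu
  -- the map `m : J ⟶ Y`
  obtain ⟨m, hm, -⟩ := E.isCokernel htu (i ≫ p)
    (by rw [← Category.assoc, Category.assoc ψ d i, hdi, hψr, hn0])
  -- the map `e : A ⟶ J`
  obtain ⟨e, hqe, -⟩ := E.isCokernel hψconf (d ≫ u)
    (by rw [← Category.assoc, E.comp_zero htu])
  have hq_epi : Epi q := E.epi_of_conflation hψconf
  -- `f = e ≫ m`
  have hfm : e ≫ m = f := by
    rw [← cancel_epi q, ← Category.assoc, hqe, Category.assoc, hm, ← Category.assoc, hdi,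
      hPB.w]
  -- `e` is a deflation
  have he : E.Deflation e := by
    refine hwic.2 q e ?_
    rw [hqe]
    exact E.deflation_comp d u hd ⟨_, _, htu⟩
  -- the induced map `c' : Y ⟶ Co`
  obtain ⟨c', hc', -⟩ := E.isCokernel hnp c
    (by
      have hh : n = (ψ ≫ d) ≫ i := by rw [Category.assoc, hdi, hψr]
      rw [hh, Category.assoc, E.comp_zero hic, comp_zero])
  -- `c'` is a deflation
  obtain ⟨J'', m'', hm''⟩ : E.Deflation c' := by
    refine hwic.2 p c' ?_
    rw [hc']
    exact ⟨I, i, hic⟩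
  have hmono_m'' : Mono m'' := E.mono_of_conflation_s2 hm''
  -- `m` is mono
  have hmono_m : Mono m := by
    constructor
    intro W a b hab
    have h0 : (a - b) ≫ m = 0 := by rw [Preadditive.sub_comp, hab, sub_self]
    obtain ⟨Q, s, q', hPB', K', k', hk'⟩ := E.pullback_deflation u ⟨_, _, htu⟩ (a - b)
    have h1 : (s ≫ i) ≫ p = 0 := by
      rw [Category.assoc, ← hm, ← Category.assoc, hPB'.w, Category.assoc, h0, comp_zero]
    obtain ⟨z', hz', -⟩ := E.isKernel hnp (s ≫ i) h1
    have hs : z' ≫ (ψ ≫ d) = s := by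
      rw [← cancel_mono i, Category.assoc, hn', hz']
    have h2 : q' ≫ (a - b) = 0 := by
      rw [← hPB'.w, ← hs, Category.assoc, E.comp_zero htu, comp_zero]
    have hq'_epi : Epi q' := E.epi_of_conflation hk'
    have : a - b = 0 := by rwa [← cancel_epi q', comp_zero]
    rw [← sub_eq_zero]; exact this
  -- `m` satisfies the kernel property for `c'`
  have hker : ∀ {W : C} (w : W ⟶ Y), w ≫ c' = 0 → ∃ l : W ⟶ J, l ≫ m = w := by
    intro W w hw
    obtain ⟨Q, s, qw, hPBw, Kw, kw, hkw⟩ := E.pullback_deflation p ⟨N, n, hnp⟩ w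
    have hsc : s ≫ c = 0 := by
      rw [← hc', ← Category.assoc, hPBw.w, Category.assoc, hw, comp_zero]
    obtain ⟨v, hv, -⟩ := E.isKernel hic s hsc
    obtain ⟨z2, hz2, -⟩ := E.isKernel hnp (kw ≫ s)
      (by rw [Category.assoc, hPBw.w, ← Category.assoc, E.comp_zero hkw, zero_comp])
    have hkv : kw ≫ v = z2 ≫ (ψ ≫ d) := by
      rw [← cancel_mono i, Category.assoc, hv, Category.assoc, hn', hz2]
    obtain ⟨l, hl, -⟩ := E.isCokernel hkw (v ≫ u)
      (by rw [← Category.assoc, hkv, Category.assoc, E.comp_zero htu, comp_zero])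
    refine ⟨l, ?_⟩
    have hqw_epi : Epi qw := E.epi_of_conflation hkw
    rw [← cancel_epi qw, ← Category.assoc, hl, Category.assoc, hm, ← Category.assoc, hv,
      hPBw.w]
  -- `m ≫ c' = 0`
  have hmc' : m ≫ c' = 0 := by
    rw [← cancel_epi u, ← Category.assoc, hm, Category.assoc, hc', E.comp_zero hic,
      comp_zero]
  obtain ⟨l1, hl1, -⟩ := E.isKernel hm'' m hmc'
  obtain ⟨l2, hl2⟩ := hker m'' (E.comp_zero hm'')
  have h12 : l1 ≫ l2 = 𝟙 J := by
    rw [← cancel_mono m, Category.assoc, hl2, hl1, Category.id_comp]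
  have h21 : l2 ≫ l1 = 𝟙 J'' := by
    rw [← cancel_mono m'', Category.assoc, hl1, hl2, Category.id_comp]
  have hmconf : E.IsConflation m c' :=
    E.conflation_iso (Iso.mk l2 l1 h21 h12) (Iso.refl Y) (Iso.refl Co) hm''
      (by simp [hl2]) (by simp)
  exact ⟨J, e, m, he, ⟨Co, c', hmconf⟩, hfm⟩
end

section
/- Let D be a triangulated category with a bounded t-structure (D^{≤0}, D^{≥0}), fix d ≥ 1, and let X be a full subcategory of the d-extended heart D^{[-d+1,0]} that is closed under d-factors. Then X is closed under direct summands. -/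
open CategoryTheory Category Limits Pretriangulated Triangulated

universe v u

variable {C : Type u} [Category.{v} C] [Preadditive C] [HasZeroObject C] [HasShift C ℤ]
  [∀ (n : ℤ), (shiftFunctor C n).Additive] [Pretriangulated C]

/-- The t-structure `t` is bounded. -/
def IsBoundedTStr (t : TStructure C) : Prop :=
  ∀ X : C, ∃ a b : ℤ, t.ge a X ∧ t.le b X

/-- The `d`-extended heart `D^{[-d+1,0]}` of the t-structure `t`, as a set of objects. -/
def extHeart (t : TStructure C) (d : ℕ) : Set C :=
  fun X => t.le 0 X ∧ t.ge (1 - (d : ℤ)) X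

/-- A set of objects closed under isomorphisms. -/
def IsoClosed (S : Set C) : Prop := ∀ ⦃X Y : C⦄, (X ≅ Y) → X ∈ S → Y ∈ S

/-- `Z ∈ D^{[-d+1,0]}` is a `d`-factor of `𝒳`: there are `d` distinguished triangles
`Z_i → X_i → Z_{i-1} → Z_i[1]` (`1 ≤ i ≤ d`) with `Z_0 = Z`, `Z_i ∈ D^{[-d+1,0]}` and
`X_i ∈ 𝒳`. -/
def IsDFactor (t : TStructure C) (d : ℕ) (𝒳 : Set C) (Z : C) : Prop :=
  Z ∈ extHeart t d ∧
  ∃ (Zc : ℕ → C) (Xc : ℕ → C), Zc 0 = Z ∧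
    ∀ i : ℕ, 1 ≤ i → i ≤ d →
      Zc i ∈ extHeart t d ∧ Xc i ∈ 𝒳 ∧
      ∃ (f : Zc i ⟶ Xc i) (g : Xc i ⟶ Zc (i - 1)) (h : Zc (i - 1) ⟶ (Zc i)⟦(1 : ℤ)⟧),
        Triangle.mk f g h ∈ (distTriang C)

/-- `Fac_d(𝒳)`, the set of `d`-factors of `𝒳`. -/
def facd (t : TStructure C) (d : ℕ) (𝒳 : Set C) : Set C := fun Z => IsDFactor t d 𝒳 Z

/-- `𝒳` is closed under `d`-factors. -/
def ClosedUnderDFactors (t : TStructure C) (d : ℕ) (𝒳 : Set C) : Prop :=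
  ∀ Z : C, IsDFactor t d 𝒳 Z → Z ∈ 𝒳

/-- `S` is closed under extensions: the middle term of any distinguished triangle whose
outer terms lie in `S` lies in `S`. -/
def ExtClosed (S : Set C) : Prop :=
  ∀ ⦃X Y Z : C⦄ (f : X ⟶ Y) (g : Y ⟶ Z) (h : Z ⟶ X⟦(1 : ℤ)⟧),
    Triangle.mk f g h ∈ (distTriang C) → X ∈ S → Z ∈ S → Y ∈ S

/-- `𝒳 ⊆ D^{[-d+1,0]}` is `d`-FAE closed: closed under isomorphisms, `d`-factors and
extensions. -/
def IsDFAEClosed (t : TStructure C) (d : ℕ) (𝒳 : Set C) : Prop :=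
  𝒳 ⊆ extHeart t d ∧ IsoClosed 𝒳 ∧ ClosedUnderDFactors t d 𝒳 ∧ ExtClosed 𝒳

/-- `A * B`: the set of objects `Z` fitting in a distinguished triangle `X → Z → Y → X[1]`
with `X ∈ A` and `Y ∈ B`. -/
def star (A B : Set C) : Set C := fun Z =>
  ∃ (X : C) (_ : X ∈ A) (Y : C) (_ : Y ∈ B) (f : X ⟶ Z) (g : Z ⟶ Y) (h : Y ⟶ X⟦(1 : ℤ)⟧),
    Triangle.mk f g h ∈ (distTriang C)

/-- A suspended subcategory: closed under isomorphisms, extensions and positive shifts. -/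
def Suspended (S : Set C) : Prop :=
  IsoClosed S ∧ ExtClosed S ∧ ∀ X ∈ S, X⟦(1 : ℤ)⟧ ∈ S

/-- The aisle `D^{≤ n}` as a set. -/
def aisle (t : TStructure C) (n : ℤ) : Set C := fun X => t.le n X

/-- The coaisle `D^{≥ n}` as a set. -/
def coaisle (t : TStructure C) (n : ℤ) : Set C := fun X => t.ge n X

/-- The right Hom-orthogonal `S^⊥` inside the extended heart. -/
def rPerp (t : TStructure C) (d : ℕ) (S : Set C) : Set C :=
  fun Z => Z ∈ extHeart t d ∧ ∀ Y ∈ S, ∀ f : Y ⟶ Z, f = 0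

/-- The left Hom-orthogonal `^⊥S` inside the extended heart. -/
def lPerp (t : TStructure C) (d : ℕ) (S : Set C) : Set C :=
  fun Z => Z ∈ extHeart t d ∧ ∀ Y ∈ S, ∀ f : Z ⟶ Y, f = 0

/-- `S^{⊥_{≤0}} = {Z ∈ D^{[-d+1,0]} : Hom(S, Z[j]) = 0 for all j ≤ 0}`. -/
def rPerpLe0 (t : TStructure C) (d : ℕ) (S : Set C) : Set C :=
  fun Z => Z ∈ extHeart t d ∧ ∀ Y ∈ S, ∀ j : ℤ, j ≤ 0 → ∀ f : Y ⟶ Z⟦j⟧, f = 0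

/-- `^{⊥_{≤0}}S = {Z ∈ D^{[-d+1,0]} : Hom(Z, S[j]) = 0 for all j ≤ 0}`. -/
def lPerpLe0 (t : TStructure C) (d : ℕ) (S : Set C) : Set C :=
  fun Z => Z ∈ extHeart t d ∧ ∀ Y ∈ S, ∀ j : ℤ, j ≤ 0 → ∀ f : Z ⟶ Y⟦j⟧, f = 0

/-- `(T, F)` is a torsion pair in the extended heart. -/
def IsTorsionPair (t : TStructure C) (d : ℕ) (T F : Set C) : Prop :=
  T ⊆ extHeart t d ∧ F ⊆ extHeart t d ∧ T = lPerp t d F ∧ F = rPerp t d T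

/-- `(T, F)` is a positive torsion pair: a torsion pair with `Hom(T, F[j]) = 0` for all
`j ≤ 0`. -/
def IsPositiveTorsionPair (t : TStructure C) (d : ℕ) (T F : Set C) : Prop :=
  IsTorsionPair t d T F ∧
  ∀ X ∈ T, ∀ Y ∈ F, ∀ j : ℤ, j ≤ 0 → ∀ f : X ⟶ Y⟦j⟧, f = 0

/-- `(T, F)` is an `s`-torsion pair in the extended heart: `D^{[-d+1,0]} = T * F`,
`Hom(T, F) = 0` and `Hom(T, F[-1]) = 0`. -/
def IsSTorsionPair (t : TStructure C) (d : ℕ) (T F : Set C) : Prop :=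
  T ⊆ extHeart t d ∧ F ⊆ extHeart t d ∧
  (∀ Z ∈ extHeart t d,
    ∃ (X : C) (_ : X ∈ T) (Y : C) (_ : Y ∈ F) (f : X ⟶ Z) (g : Z ⟶ Y)
      (h : Y ⟶ X⟦(1 : ℤ)⟧), Triangle.mk f g h ∈ (distTriang C)) ∧
  (∀ X ∈ T, ∀ Y ∈ F, ∀ f : X ⟶ Y, f = 0) ∧
  (∀ X ∈ T, ∀ Y ∈ F, ∀ f : X ⟶ Y⟦(-1 : ℤ)⟧, f = 0)

/-- A semibrick in the `d`-extended heart. -/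
def IsSemibrick (t : TStructure C) (d : ℕ) (S : Set C) : Prop :=
  S ⊆ extHeart t d ∧
  (∀ X ∈ S, ¬ IsZero X ∧ ∀ f : X ⟶ X, f ≠ 0 → IsIso f) ∧
  (∀ X ∈ S, ∀ Y ∈ S, ∀ i : ℤ, i < 0 → ∀ f : X ⟶ Y⟦i⟧, f = 0) ∧
  (∀ X ∈ S, ∀ Y ∈ S, IsEmpty (X ≅ Y) → ∀ f : X ⟶ Y, f = 0)

/-- The simple objects of an extension-closed subcategory `W` (whose conflations are the
distinguished triangles with all three terms in `W`): nonzero objects admitting no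
conflation `L ↣ X ↠ M` in `W` with both `L` and `M` nonzero. -/
def simOf (W : Set C) : Set C := fun X =>
  X ∈ W ∧ ¬ IsZero X ∧
  ∀ ⦃L M : C⦄ (f : L ⟶ X) (g : X ⟶ M) (h : M ⟶ L⟦(1 : ℤ)⟧),
    Triangle.mk f g h ∈ (distTriang C) → L ∈ W → M ∈ W → IsZero L ∨ IsZero M

/-- `FiltMem S X`: the object `X` admits a finite filtration with subquotients in `S`. -/
inductive FiltMem (S : Set C) : C → Prop
  | zero (X : C) : IsZero X → FiltMem S X
  | step (Y X Sm : C) (f : Y ⟶ X) (g : X ⟶ Sm) (h : Sm ⟶ Y⟦(1 : ℤ)⟧) :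
      Triangle.mk f g h ∈ (distTriang C) → FiltMem S Y → Sm ∈ S → FiltMem S X

/-- `ExtClosureMem S X`: membership in the extension closure of `S` (the smallest
subcategory containing `S` and the zero objects, closed under isomorphisms and
extensions). -/
inductive ExtClosureMem (S : Set C) : C → Prop
  | of (X : C) : X ∈ S → ExtClosureMem S X
  | zero (X : C) : IsZero X → ExtClosureMem S X
  | iso (X Y : C) : (X ≅ Y) → ExtClosureMem S X → ExtClosureMem S Y
  | ext (X Y Z : C) (f : X ⟶ Y) (g : Y ⟶ Z) (h : Z ⟶ X⟦(1 : ℤ)⟧) :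
      Triangle.mk f g h ∈ (distTriang C) → ExtClosureMem S X → ExtClosureMem S Z →
      ExtClosureMem S Y

/-- A wide subcategory of the `d`-extended heart: closed under isomorphisms and
extensions, with `Hom(W, W[i]) = 0` for `i < 0`, and such that the restricted
extriangulated structure is abelian, i.e., there is an abelian structure on the
corresponding full subcategory whose short exact sequences (kernel-cokernel pairs) are
exactly the distinguished triangles with all three terms in `W`. -/
def IsWide (t : TStructure C) (d : ℕ) (W : Set C) : Prop :=
  W ⊆ extHeart t d ∧ IsoClosed W ∧ ExtClosed W ∧
  (∀ X ∈ W, ∀ Y ∈ W, ∀ i : ℤ, i < 0 → ∀ f : X ⟶ Y⟦i⟧, f = 0) ∧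
  ∃ _ : Abelian (ObjectProperty.FullSubcategory fun X => X ∈ W),
    ∀ (X Y Z : ObjectProperty.FullSubcategory fun X => X ∈ W) (f : X ⟶ Y) (g : Y ⟶ Z),
      ((f ≫ g = 0) ∧
        (∀ (V : ObjectProperty.FullSubcategory fun X => X ∈ W) (k : V ⟶ Y), k ≫ g = 0 →
          ∃! l : V ⟶ X, l ≫ f = k) ∧
        (∀ (V : ObjectProperty.FullSubcategory fun X => X ∈ W) (k : Y ⟶ V), f ≫ k = 0 →
          ∃! l : Z ⟶ V, g ≫ l = k))
      ↔ ∃ h : Z.obj ⟶ X.obj⟦(1 : ℤ)⟧,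
          Triangle.mk (show X.obj ⟶ Y.obj from f.hom) (show Y.obj ⟶ Z.obj from g.hom) h ∈
            (distTriang C)

/-- A finite-length wide subcategory: a wide subcategory in which every object has a
finite filtration with simple subquotients. -/
def IsFiniteLengthWide (t : TStructure C) (d : ℕ) (W : Set C) : Prop :=
  IsWide t d W ∧ ∀ X ∈ W, FiltMem (simOf W) X

/-- The shift `S[n]` of a set of objects. -/
def shiftSet (S : Set C) (n : ℤ) : Set C := fun X => X⟦-n⟧ ∈ S

/-- The exact heart `H_T = (D^{≤ -d} * T) ∩ (T^⊥[1] * D^{≥ 0})` of a `d`-FAE closed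
subcategory `T`. -/
def heartOf (t : TStructure C) (d : ℕ) (T : Set C) : Set C :=
  star (aisle t (-(d : ℤ))) T ∩ star (shiftSet (rPerp t d T) 1) (coaisle t 0)

/-- `phiClosure t d S`: the smallest `d`-FAE closed subcategory of the extended heart
containing `S`. -/
def phiClosure (t : TStructure C) (d : ℕ) (S : Set C) : Set C :=
  fun X => ∀ U : Set C, IsDFAEClosed t d U → S ⊆ U → X ∈ U

/-!
`X ⊞ Y` sits in the split triangles `Y → X ⊞ Y → X → Y[1]` and `X → X ⊞ Y → Y → X[1]`.
Using them alternately, `d` times, exhibits `X` as a `d`-factor of `𝒳`; the terms `X` and `Y`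
stay in `D^{[-d+1,0]}` because aisles and coaisles, being orthogonals, are closed under retracts.
-/

namespace CategoryTheory.Triangulated.TStructure

variable (t : TStructure C)

instance isStableUnderRetracts_le (n : ℤ) : (t.le n).IsStableUnderRetracts where
  of_retract {X Y} h hY := by
    have : t.IsLE Y n := ⟨hY⟩
    rw [t.le_iff_isLE, t.isLE_iff_orthogonal n (n + 1) rfl]
    intro Z f _
    calc f = h.i ≫ h.r ≫ f := by simp
      _ = 0 := by rw [t.zero (h.r ≫ f) n (n + 1), comp_zero]

instance isStableUnderRetracts_ge (n : ℤ) : (t.ge n).IsStableUnderRetracts where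
  of_retract {X Y} h hY := by
    have : t.IsGE Y n := ⟨hY⟩
    rw [t.ge_iff_isGE, t.isGE_iff_orthogonal (n - 1) n (by lia)]
    intro Z f _
    calc f = (f ≫ h.i) ≫ h.r := by simp
      _ = 0 := by rw [t.zero (f ≫ h.i) (n - 1) n, zero_comp]

end CategoryTheory.Triangulated.TStructure

lemma biprod_inr_fst_triangle_distinguished (X Y : C) :
    Triangle.mk (biprod.inr : Y ⟶ X ⊞ Y) biprod.fst 0 ∈ distTriang C :=
  isomorphic_distinguished _ (binaryBiproductTriangle_distinguished Y X) _
    (Triangle.isoMk _ _ (Iso.refl Y) (biprod.braiding X Y) (Iso.refl X)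
      (show biprod.inr ≫ (biprod.braiding X Y).hom = 𝟙 Y ≫ biprod.inl by cat_disch)
      (show biprod.fst ≫ 𝟙 X = (biprod.braiding X Y).hom ≫ biprod.snd by simp)
      (show 0 ≫ (shiftFunctor C 1).map (𝟙 Y) = 𝟙 X ≫ 0 by simp))

section DFactors

variable {t : TStructure C} {d : ℕ}

lemma mem_extHeart_of_retract {X Y : C} (h : Retract X Y) (hY : Y ∈ extHeart t d) :
    X ∈ extHeart t d :=
  ⟨(t.le 0).prop_of_retract h hY.1, (t.ge _).prop_of_retract h hY.2⟩

lemma isDFactor_of_alternating_triangles {𝒳 : Set C} {A B M : C} (hA : A ∈ extHeart t d)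
    (hB : B ∈ extHeart t d) (hM : M ∈ 𝒳) (f₁ : B ⟶ M) (g₁ : M ⟶ A) (h₁ : A ⟶ B⟦(1 : ℤ)⟧)
    (hT₁ : Triangle.mk f₁ g₁ h₁ ∈ distTriang C) (f₂ : A ⟶ M) (g₂ : M ⟶ B)
    (h₂ : B ⟶ A⟦(1 : ℤ)⟧) (hT₂ : Triangle.mk f₂ g₂ h₂ ∈ distTriang C) :
    IsDFactor t d 𝒳 A := by
  refine ⟨hA, fun i => if Even i then A else B, fun _ => M, by simp, fun i hi _ => ?_⟩
  beta_reduce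
  rcases Nat.even_or_odd i with hi_even | hi_odd
  · have hprev : ¬ Even (i - 1) :=
      Nat.not_even_iff_odd.2 (Nat.Even.sub_odd hi hi_even odd_one)
    rw [if_pos hi_even, if_neg hprev]
    exact ⟨hA, hM, f₂, g₂, h₂, hT₂⟩
  · have hprev : Even (i - 1) := Nat.Odd.sub_odd hi_odd odd_one
    rw [if_neg (Nat.not_even_iff_odd.2 hi_odd), if_pos hprev]
    exact ⟨hB, hM, f₁, g₁, h₁, hT₁⟩

end DFactors

theorem closedUnderDFactors_summands_general
    (t : TStructure C) (d : ℕ)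
    (𝒳 : Set C) (h𝒳 : 𝒳 ⊆ extHeart t d) (hfac : ClosedUnderDFactors t d 𝒳) :
    ∀ X Y : C, (X ⊞ Y) ∈ 𝒳 → X ∈ 𝒳 := by
  intro X Y hXY
  have hXY_heart := h𝒳 hXY
  have hX := mem_extHeart_of_retract (BinaryBiproduct.bicone X Y).retract_left hXY_heart
  have hY := mem_extHeart_of_retract (BinaryBiproduct.bicone X Y).retract_right hXY_heart
  exact hfac X <| isDFactor_of_alternating_triangles hX hY hXY _ _ _
    (biprod_inr_fst_triangle_distinguished X Y) _ _ _ (binaryBiproductTriangle_distinguished X Y)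

/-- **(Lemma, closure under direct summands.)** Let `𝒳 ⊆ D^{[-d+1,0]}` be closed under
`d`-factors. Then `𝒳` is closed under direct summands. -/
theorem closedUnderDFactors_summands [HasBinaryBiproducts C]
    (t : TStructure C) (hb : IsBoundedTStr t) (d : ℕ) (hd : 1 ≤ d)
    (𝒳 : Set C) (h𝒳 : 𝒳 ⊆ extHeart t d) (hfac : ClosedUnderDFactors t d 𝒳) :
    ∀ X Y : C, (X ⊞ Y) ∈ 𝒳 → X ∈ 𝒳 :=
  closedUnderDFactors_summands_general t d 𝒳 h𝒳 hfac
end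

section
/- Let D be a triangulated category with a bounded t-structure and d ≥ 1. Every suspended subcategory C of D with D^{≤-d} ⊆ C ⊆ D^{≤0} is closed under direct summands. -/
open CategoryTheory Category Limits Pretriangulated Triangulated

universe v u

variable {C : Type u} [Category.{v} C] [Preadditive C] [HasZeroObject C] [HasShift C ℤ]
  [∀ (n : ℤ), (shiftFunctor C n).Additive] [Pretriangulated C]

/-!
A bounded t-structure pushes every object deep into `D^{≤ -d} ⊆ 𝒞` after a large enough
shift, so `X⟦n⟧, Y⟦n⟧ ∈ 𝒞` for `n ≫ 0`. Descend in `n`: the split triangle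
`Y → Y ⊞ X → X → Y⟦1⟧`, rotated and shifted by `k ≥ 0`, gives a distinguished triangle
`(Y ⊞ X)⟦k⟧ → X⟦k⟧ → Y⟦k+1⟧ → ⋯` whose outer terms lie in `𝒞`, so `X⟦k⟧ ∈ 𝒞`; symmetrically
for `Y`. At `n = 0` this gives `X ∈ 𝒞`.
-/

lemma CategoryTheory.Triangulated.TStructure.le_shift_of_le_add (t : TStructure C) {X : C}
    {a b n : ℤ} (hX : t.le a X) (h : a ≤ b + n) : t.le b (X⟦n⟧) :=
  t.le_monotone (show a - n ≤ b by omega) _ (t.le_shift a n (a - n) (by ring) X hX)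

namespace Suspended

variable {S : Set C}

lemma shift_natCast_mem (hS : Suspended S) {X : C} (hX : X ∈ S) (n : ℕ) :
    X⟦(n : ℤ)⟧ ∈ S := by
  induction n with
  | zero => exact hS.1 ((shiftFunctorZero C ℤ).symm.app X) hX
  | succ n ih =>
    exact hS.1
      ((shiftFunctorAdd' C (n : ℤ) 1 ((n + 1 : ℕ) : ℤ) (by push_cast; ring)).symm.app X)
      (hS.2.2 _ ih)

lemma shift_mem_of_biprod_mem (hS : Suspended S) {A B : C} (hAB : (A ⊞ B) ∈ S) (k : ℕ)
    (hB : B⟦((k + 1 : ℕ) : ℤ)⟧ ∈ S) : A⟦(k : ℤ)⟧ ∈ S := by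
  have hT := Triangle.shift_distinguished _
    (rot_of_distTriang _ (binaryBiproductTriangle_distinguished B A)) (k : ℤ)
  refine hS.2.1 _ _ _ hT ?_ ?_
  · exact hS.1 ((shiftFunctor C (k : ℤ)).mapIso (biprod.braiding A B))
      (hS.shift_natCast_mem hAB k)
  · exact hS.1
      ((shiftFunctorAdd' C 1 (k : ℤ) ((k + 1 : ℕ) : ℤ) (by push_cast; ring)).app B) hB

lemma mem_of_biprod_mem_of_shift_mem (hS : Suspended S) {A B : C} (hAB : (A ⊞ B) ∈ S)
    (n : ℕ) (hA : A⟦(n : ℤ)⟧ ∈ S) (hB : B⟦(n : ℤ)⟧ ∈ S) : A ∈ S := by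
  have hBA : (B ⊞ A) ∈ S := hS.1 (biprod.braiding A B) hAB
  induction n with
  | zero => exact hS.1 ((shiftFunctorZero C ℤ).app A) hA
  | succ n ih =>
    exact ih (hS.shift_mem_of_biprod_mem hAB n hB) (hS.shift_mem_of_biprod_mem hBA n hA)

end Suspended

theorem suspended_summands_general
    (t : TStructure C) (hb : IsBoundedTStr t) (d : ℕ)
    (𝒞 : Set C) (hsusp : Suspended 𝒞)
    (h₁ : aisle t (-(d : ℤ)) ⊆ 𝒞) :
    ∀ X Y : C, (X ⊞ Y) ∈ 𝒞 → X ∈ 𝒞 := by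
  intro X Y hXY
  obtain ⟨-, bX, -, hX⟩ := hb X
  obtain ⟨-, bY, -, hY⟩ := hb Y
  set n : ℕ := (max bX bY + d).toNat
  have hXn : X⟦(n : ℤ)⟧ ∈ 𝒞 := h₁ (t.le_shift_of_le_add hX (by omega))
  have hYn : Y⟦(n : ℤ)⟧ ∈ 𝒞 := h₁ (t.le_shift_of_le_add hY (by omega))
  exact hsusp.mem_of_biprod_mem_of_shift_mem hXY n hXn hYn

/-- **(Remark, suspended subcategories are summand-closed.)** Every suspended
subcategory `𝒞` of `D` with `D^{≤ -d} ⊆ 𝒞 ⊆ D^{≤ 0}` is closed under direct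
summands. -/
theorem suspended_summands [HasBinaryBiproducts C]
    (t : TStructure C) (hb : IsBoundedTStr t) (d : ℕ) (hd : 1 ≤ d)
    (𝒞 : Set C) (hsusp : Suspended 𝒞)
    (h₁ : aisle t (-(d : ℤ)) ⊆ 𝒞) (h₂ : 𝒞 ⊆ aisle t 0) :
    ∀ X Y : C, (X ⊞ Y) ∈ 𝒞 → X ∈ 𝒞 :=
  suspended_summands_general t hb d 𝒞 hsusp h₁
end

section
/- Let D be a triangulated category with a bounded t-structure, d ≥ 1, and Y a full subcategory of D^{[-d+1,0]}. Then Y^{⊥_{≤0}} = (Fac_d Y)^{⊥_{≤0}} = (Fac_d Y)^⊥, where Y^{⊥_{≤0}} = {Z ∈ D^{[-d+1,0]} : Hom(Y, Z[j]) = 0 for all Y ∈ Y and all j ≤ 0}. -/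
open CategoryTheory Category Limits Pretriangulated Triangulated

universe v u

variable {C : Type u} [Category.{v} C] [Preadditive C] [HasZeroObject C] [HasShift C ℤ]
  [∀ (n : ℤ), (shiftFunctor C n).Additive] [Pretriangulated C]

/-!
The three sets are linked by `𝒴^{⊥≤0} ⊆ (Fac_d 𝒴)^{⊥≤0} ⊆ (Fac_d 𝒴)^⊥ ⊆ 𝒴^{⊥≤0}`.

For the first inclusion, let `Zᵢ → Xᵢ → Zᵢ₋₁ → Zᵢ[1]` present `W = Z₀` as a `d`-factor.
By descending induction on `i`, `Hom(Zᵢ, Z[j]) = 0` for `j ≤ -i`: for `i = d` since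
`Z_d ∈ D^{≤0}` and `Z[j] ∈ D^{≥1}`; and a map `Zᵢ₋₁ → Z[j]` is killed by `Xᵢ ∈ 𝒴`, so it
factors through `Zᵢ[1] → Z[j]`, a shift of a map `Zᵢ → Z[j-1]`.

For the last one, a map `Y → Z[-n]` with `Y ∈ 𝒴` and `0 ≤ n < d` (for `n ≥ d` it vanishes
for degree reasons) factors through `G = σ_{≥n-d+1} Y`, and `G[n]` or `Y ⊕ G[n]` is a
`d`-factor of `𝒴`. Indeed `σ_{≤n-d} Y → Y → G` is the first step of a chain for `G`, and any
`V` in the extended heart extends a chain of `V[-1]`, resp. of `Y ⊕ V[-1]`, by the split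
triangle `V[-1] → Y → Y ⊕ V → V`, resp. `Y ⊕ V[-1] → Y → V → (Y ⊕ V[-1])[1]`. Alternating
the two pads the chain below `σ_{≤n-d} Y` and climbs from `G` to `G[n]`.
-/

lemma CategoryTheory.Functor.eq_zero_of_forall_eq_zero {𝒜 ℬ : Type*} [Category 𝒜] [Category ℬ]
    [HasZeroMorphisms 𝒜] [HasZeroMorphisms ℬ] (F : 𝒜 ⥤ ℬ) [F.Faithful]
    [F.PreservesZeroMorphisms] {X Y : 𝒜} {X' Y' : ℬ} (eX : X' ≅ F.obj X) (eY : F.obj Y ≅ Y')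
    (h : ∀ g : X' ⟶ Y', g = 0) (f : X ⟶ Y) : f = 0 :=
  F.map_injective <| by
    rw [F.map_zero, ← cancel_epi eX.hom, ← cancel_mono eY.hom, comp_zero, zero_comp, assoc]
    exact h _

lemma CategoryTheory.Triangulated.TStructure.isGE_shift_neg_one (t : TStructure C) (V : C) (a : ℤ)
    [t.IsGE V a] : t.IsGE (V⟦(-1 : ℤ)⟧) a :=
  have := t.isGE_shift V a (-1) (a + 1)
  t.isGE_of_ge _ a (a + 1)

/-- `HasFactorChain t d 𝒴 k V`: `V = Z₀` admits the first `k` triangles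
`Zᵢ → Xᵢ → Zᵢ₋₁ → Zᵢ[1]` of a presentation as a `d`-factor of `𝒴` (see `IsDFactor`). -/
inductive HasFactorChain (t : TStructure C) (d : ℕ) (𝒴 : Set C) : ℕ → C → Prop
  | zero {V : C} : V ∈ extHeart t d → HasFactorChain t d 𝒴 0 V
  | succ {k : ℕ} {V Z X : C} {f : Z ⟶ X} {g : X ⟶ V} {h : V ⟶ Z⟦(1 : ℤ)⟧} :
      V ∈ extHeart t d → X ∈ 𝒴 → Triangle.mk f g h ∈ distTriang C →
      HasFactorChain t d 𝒴 k Z → HasFactorChain t d 𝒴 (k + 1) V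

section

variable {t : TStructure C} {d : ℕ} {𝒴 : Set C}

lemma mem_extHeart_iff {X : C} : X ∈ extHeart t d ↔ t.IsLE X 0 ∧ t.IsGE X (1 - d) :=
  ⟨fun h => ⟨⟨h.1⟩, ⟨h.2⟩⟩, fun h => ⟨h.1.1, h.2.1⟩⟩

lemma extHeart_of_iso {X Y : C} (e : X ≅ Y) (hX : X ∈ extHeart t d) : Y ∈ extHeart t d :=
  ⟨(t.le 0).prop_of_iso e hX.1, (t.ge _).prop_of_iso e hX.2⟩

lemma biprod_mem_extHeart {X Y : C} (hX : X ∈ extHeart t d) (hY : Y ∈ extHeart t d) :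
    (X ⊞ Y) ∈ extHeart t d := by
  rw [mem_extHeart_iff] at *
  exact ⟨t.isLE₂ _ (binaryBiproductTriangle_distinguished X Y) 0 hX.1 hY.1,
    t.isGE₂ _ (binaryBiproductTriangle_distinguished X Y) _ hX.2 hY.2⟩

lemma eq_zero_of_le_neg_of_mem_extHeart {X Z : C} (hX : t.IsLE X 0) (hZ : Z ∈ extHeart t d)
    {j : ℤ} (hj : j ≤ -d) (f : X ⟶ Z⟦j⟧) : f = 0 :=
  have := (mem_extHeart_iff.1 hZ).2
  have := t.isGE_shift Z (1 - d) j (1 - d - j)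
  t.zero f 0 (1 - d - j)

namespace HasFactorChain

lemma mem_extHeart {k : ℕ} {V : C} : HasFactorChain t d 𝒴 k V → V ∈ extHeart t d
  | zero hV | succ hV _ _ _ => hV

lemma of_iso {k : ℕ} {V V' : C} (e : V ≅ V') (hV : HasFactorChain t d 𝒴 k V) :
    HasFactorChain t d 𝒴 k V' := by
  cases hV with
  | zero hV => exact zero (extHeart_of_iso e hV)
  | @succ k V Z X f g h hV hX hT hZ =>
    refine succ (f := f) (g := g ≫ e.hom) (h := e.inv ≫ h) (extHeart_of_iso e hV) hX
      (isomorphic_distinguished _ hT _ ?_) hZ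
    exact Triangle.isoMk _ _ (Iso.refl _) (Iso.refl _) e.symm ((comp_id f).trans (id_comp f).symm)
      ((by simp : (g ≫ e.hom) ≫ e.inv = g).trans (id_comp g).symm)
      ((congrArg _ ((shiftFunctor C (1 : ℤ)).map_id Z)).trans (comp_id _))

lemma exists_seq {k : ℕ} {V : C} (hV : HasFactorChain t d 𝒴 k V) :
    ∃ (Zc Xc : ℕ → C), Zc 0 = V ∧ ∀ i : ℕ, 1 ≤ i → i ≤ k →
      Zc i ∈ extHeart t d ∧ Xc i ∈ 𝒴 ∧
      ∃ (f : Zc i ⟶ Xc i) (g : Xc i ⟶ Zc (i - 1)) (h : Zc (i - 1) ⟶ (Zc i)⟦(1 : ℤ)⟧),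
        Triangle.mk f g h ∈ distTriang C := by
  induction hV with
  | @zero V _ => exact ⟨fun _ => V, fun _ => V, rfl, fun i h₁ h₂ => by lia⟩
  | @succ k V Z X f g h _ hX hT hZ ih =>
    obtain ⟨Zc, Xc, rfl, H⟩ := ih
    refine ⟨fun | 0 => V | i + 1 => Zc i, fun | 0 => X | 1 => X | i + 2 => Xc (i + 1), rfl, ?_⟩
    rintro (_ | _ | i) h₁ h₂
    · lia
    · exact ⟨hZ.mem_extHeart, hX, f, g, h, hT⟩
    · exact H (i + 1) (by lia) (by lia)

lemma biprod_of_shift_neg_one {k : ℕ} {X V : C} (hX : X ∈ 𝒴)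
    (hXV : (X ⊞ V) ∈ extHeart t d) (hV : HasFactorChain t d 𝒴 k (V⟦(-1 : ℤ)⟧)) :
    HasFactorChain t d 𝒴 (k + 1) (X ⊞ V) :=
  succ hXV hX (inv_rot_of_distTriang _ (binaryBiproductTriangle_distinguished X V)) hV

lemma of_biprod_shift_neg_one {k : ℕ} {X V : C} (hX : X ∈ 𝒴) (hV : V ∈ extHeart t d)
    (hXV : HasFactorChain t d 𝒴 k (X ⊞ V⟦(-1 : ℤ)⟧)) : HasFactorChain t d 𝒴 (k + 1) V :=
  let e : V⟦(-1 : ℤ)⟧⟦(1 : ℤ)⟧ ≅ V := (shiftFunctorCompIsoId C (-1) 1 (by lia)).app V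
  (succ (extHeart_of_iso e.symm hV) hX
    (rot_of_distTriang _ (binaryBiproductTriangle_distinguished _ X))
    (hXV.of_iso (biprod.braiding _ _))).of_iso e

end HasFactorChain

lemma mem_facd_iff {Z : C} :
    Z ∈ facd t d 𝒴 ↔ HasFactorChain t d 𝒴 d Z := by
  refine ⟨fun ⟨hZ, Zc, Xc, hZc, H⟩ => ?_, fun h => ⟨h.mem_extHeart, h.exists_seq⟩⟩
  subst hZc
  have hmem : ∀ i ≤ d, Zc i ∈ extHeart t d := fun
    | 0, _ => hZ
    | i + 1, hi => (H (i + 1) (by lia) hi).1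
  have key : ∀ m ≤ d, HasFactorChain t d 𝒴 m (Zc (d - m)) := by
    intro m
    induction m with
    | zero => exact fun _ => .zero (hmem d le_rfl)
    | succ m ih =>
      intro hm
      obtain ⟨-, hX, f, g, h, hT⟩ := H (d - m) (by lia) (by lia)
      exact .succ (hmem _ (by lia)) hX hT (ih (by lia))
  simpa using key d le_rfl

lemma hasFactorChain_of_isLE {X : C} (hX𝒴 : X ∈ 𝒴) (hX : X ∈ extHeart t d) (p : ℕ) (V : C)
    [t.IsLE V (-p)] [t.IsGE V (1 - d)] :
    HasFactorChain t d 𝒴 p V ∧ HasFactorChain t d 𝒴 p (X ⊞ V) := by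
  induction p generalizing V with
  | zero =>
    have hV : V ∈ extHeart t d := mem_extHeart_iff.2 ⟨t.isLE_of_le V (-(0 : ℕ)) 0, ‹_›⟩
    exact ⟨.zero hV, .zero (biprod_mem_extHeart hX hV)⟩
  | succ p ih =>
    have hV : V ∈ extHeart t d := mem_extHeart_iff.2 ⟨t.isLE_of_le V (-(p + 1 : ℕ)) 0, ‹_›⟩
    have := t.isLE_shift V (-(p + 1 : ℕ)) (-1) (-p)
    have := t.isGE_shift_neg_one V (1 - d)
    obtain ⟨h₁, h₂⟩ := ih (V⟦(-1 : ℤ)⟧)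
    exact ⟨h₂.of_biprod_shift_neg_one hX𝒴 hV,
      h₁.biprod_of_shift_neg_one hX𝒴 (biprod_mem_extHeart hX hV)⟩

lemma hasFactorChain_or_biprod_of_shift {X : C} (hX𝒴 : X ∈ 𝒴) (hX : X ∈ extHeart t d)
    (m n : ℕ) (V : C) [t.IsLE V (-n)] [t.IsGE V (1 - d)]
    (h : HasFactorChain t d 𝒴 m (V⟦(-n : ℤ)⟧) ∨ HasFactorChain t d 𝒴 m (X ⊞ V⟦(-n : ℤ)⟧)) :
    HasFactorChain t d 𝒴 (m + n) V ∨ HasFactorChain t d 𝒴 (m + n) (X ⊞ V) := by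
  induction n generalizing V with
  | zero =>
    let e := (shiftFunctorZero' C (-(0 : ℕ) : ℤ) (by simp)).app V
    exact h.imp (·.of_iso e) (·.of_iso (biprod.mapIso (Iso.refl X) e))
  | succ n ih =>
    have hV : V ∈ extHeart t d := mem_extHeart_iff.2 ⟨t.isLE_of_le V (-(n + 1 : ℕ)) 0, ‹_›⟩
    have := t.isLE_shift V (-(n + 1 : ℕ)) (-1) (-n)
    have := t.isGE_shift_neg_one V (1 - d)
    let e := (shiftFunctorAdd' C (-1 : ℤ) (-n) (-(n + 1 : ℕ)) (by lia)).app V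
    rcases ih (V⟦(-1 : ℤ)⟧) (h.imp (·.of_iso e) (·.of_iso (biprod.mapIso (Iso.refl X) e)))
      with h | h
    · exact .inr (h.biprod_of_shift_neg_one hX𝒴 (biprod_mem_extHeart hX hV))
    · exact .inl (h.of_biprod_shift_neg_one hX𝒴 hV)

lemma HasFactorChain.eq_zero {Z : C} (hZ : Z ∈ rPerpLe0 t d 𝒴) {k : ℕ} {V : C}
    (hV : HasFactorChain t d 𝒴 k V) (hk : k ≤ d) {j : ℤ} (hj : j ≤ k - d) (f : V ⟶ Z⟦j⟧) :
    f = 0 := by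
  induction hV generalizing j with
  | zero hV =>
    exact eq_zero_of_le_neg_of_mem_extHeart (mem_extHeart_iff.1 hV).1 hZ.1 (by lia) f
  | @succ k V Z₁ X f' g h _ hX hT _ ih =>
    obtain ⟨ψ, rfl⟩ := Triangle.yoneda_exact₃ _ hT f (hZ.2 X hX j (by lia) _)
    have hψ : ψ = 0 := (shiftFunctor C (-1 : ℤ)).eq_zero_of_forall_eq_zero
      ((shiftFunctorCompIsoId C 1 (-1) (by lia)).app Z₁).symm
      ((shiftFunctorAdd' C j (-1) (j - 1) (by lia)).app Z).symm (ih (by lia) (by lia)) ψ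
    rw [hψ]
    exact comp_zero

lemma hasFactorChain_truncGE {Y : C} (hY𝒴 : Y ∈ 𝒴) (hY : Y ∈ extHeart t d) {p : ℕ}
    (hp : p < d) : HasFactorChain t d 𝒴 (p + 1) ((t.truncGE (-p)).obj Y) := by
  have hT := t.triangleLTGE_distinguished (-p) Y
  obtain ⟨_, _⟩ := mem_extHeart_iff.1 hY
  have : t.IsLE ((t.truncLT (-p)).obj Y) (-p) := t.isLE_of_le _ (-p - 1) (-p)
  have : t.IsGE ((t.truncLT (-p)).obj Y) (1 - d) := by
    have := t.isGE_shift_neg_one ((t.truncGE (-p)).obj Y) (-p)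
    have := t.isGE_of_ge (((t.truncGE (-p)).obj Y)⟦(-1 : ℤ)⟧) (1 - d) (-p)
    exact t.isGE₂ _ (inv_rot_of_distTriang _ hT) _ ‹_› ‹_›
  have hG : (t.truncGE (-p)).obj Y ∈ extHeart t d := by
    have := t.isLE_shift ((t.truncLT (-p)).obj Y) (-p) 1 (-p - 1)
    have := t.isLE_of_le (((t.truncLT (-p)).obj Y)⟦(1 : ℤ)⟧) (-p - 1) 0
    exact mem_extHeart_iff.2 ⟨t.isLE₂ _ (rot_of_distTriang _ hT) _ ‹_› ‹_›,
      t.isGE_of_ge _ (1 - d) (-p)⟩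
  exact .succ hG hY𝒴 hT (hasFactorChain_of_isLE hY𝒴 hY p _).1

lemma rPerpLe0_subset_rPerp (S : Set C) : rPerpLe0 t d S ⊆ rPerp t d S := fun Z hZ =>
  ⟨hZ.1, fun Y hY f => by
    simpa using hZ.2 Y hY 0 le_rfl (f ≫ (shiftFunctorZero C ℤ).inv.app Z)⟩

lemma rPerpLe0_subset_rPerpLe0_facd : rPerpLe0 t d 𝒴 ⊆ rPerpLe0 t d (facd t d 𝒴) :=
  fun Z hZ => ⟨hZ.1, fun _ hW j hj f =>
    (mem_facd_iff.1 hW).eq_zero hZ le_rfl (by lia) f⟩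

lemma eq_zero_of_hasFactorChain_or {Z X V : C} (hZ : ∀ W ∈ facd t d 𝒴, ∀ f : W ⟶ Z, f = 0)
    (hV : HasFactorChain t d 𝒴 d V ∨ HasFactorChain t d 𝒴 d (X ⊞ V)) (f : V ⟶ Z) : f = 0 := by
  rcases hV with hV | hV
  · exact hZ _ (mem_facd_iff.2 hV) f
  · simpa using biprod.inr ≫= hZ _ (mem_facd_iff.2 hV) (biprod.snd ≫ f)

lemma rPerp_facd_subset_rPerpLe0 (h𝒴 : 𝒴 ⊆ extHeart t d) :
    rPerp t d (facd t d 𝒴) ⊆ rPerpLe0 t d 𝒴 := by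
  rintro Z ⟨hZ, hperp⟩
  refine ⟨hZ, fun Y hY𝒴 j hj f => ?_⟩
  have hY := h𝒴 hY𝒴
  rcases le_or_gt j (-d) with hjd | hjd
  · exact eq_zero_of_le_neg_of_mem_extHeart (mem_extHeart_iff.1 hY).1 hZ hjd f
  obtain ⟨n, rfl⟩ := Int.exists_eq_neg_ofNat hj
  obtain ⟨p, hd⟩ : ∃ p, p + 1 + n = d := ⟨d - n - 1, by lia⟩
  have := (mem_extHeart_iff.1 hZ).2
  have := t.isGE_shift Z (1 - d) (-n) (-p)
  obtain ⟨g, rfl⟩ := Triangle.yoneda_exact₂ _ (t.triangleLTGE_distinguished (-p) Y) f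
    (t.zero _ (-p - 1) (-p))
  set G := (t.truncGE (-p)).obj Y
  have hG : HasFactorChain t d 𝒴 (p + 1) G := hasFactorChain_truncGE hY𝒴 hY (by lia)
  obtain ⟨_, _⟩ := mem_extHeart_iff.1 hG.mem_extHeart
  have := t.isLE_shift G 0 n (-n)
  have := t.isGE_shift G (-p) n (1 - d)
  have hGn := hasFactorChain_or_biprod_of_shift hY𝒴 hY (p + 1) n (G⟦(n : ℤ)⟧)
    (.inl (hG.of_iso ((shiftFunctorCompIsoId C (n : ℤ) (-n) (by lia)).app G).symm))
  rw [hd] at hGn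
  rw [(shiftFunctor C (n : ℤ)).eq_zero_of_forall_eq_zero (Iso.refl _)
    ((shiftFunctorCompIsoId C (-n : ℤ) n (by lia)).app Z)
    (eq_zero_of_hasFactorChain_or hperp hGn) g]
  exact comp_zero

end

theorem rPerpLe0_facd_general (t : TStructure C) (d : ℕ) (𝒴 : Set C) (h𝒴 : 𝒴 ⊆ extHeart t d) :
    rPerpLe0 t d 𝒴 = rPerpLe0 t d (facd t d 𝒴) ∧
    rPerpLe0 t d 𝒴 = rPerp t d (facd t d 𝒴) :=
  have h₁ : rPerpLe0 t d 𝒴 ⊆ rPerpLe0 t d (facd t d 𝒴) := rPerpLe0_subset_rPerpLe0_facd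
  have h₂ : rPerpLe0 t d (facd t d 𝒴) ⊆ rPerp t d (facd t d 𝒴) := rPerpLe0_subset_rPerp _
  have h₃ : rPerp t d (facd t d 𝒴) ⊆ rPerpLe0 t d 𝒴 := rPerp_facd_subset_rPerpLe0 h𝒴
  ⟨h₁.antisymm (h₂.trans h₃), (h₁.trans h₂).antisymm h₃⟩

/-- **(Lemma, orthogonals of `d`-factor closures.)** For any subcategory `𝒴` of
`D^{[-d+1,0]}`, we have `𝒴^{⊥_{≤0}} = (Fac_d 𝒴)^{⊥_{≤0}} = (Fac_d 𝒴)^⊥`. -/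
theorem rPerpLe0_facd (t : TStructure C) (hb : IsBoundedTStr t)
    (d : ℕ) (hd : 1 ≤ d) (𝒴 : Set C) (h𝒴 : 𝒴 ⊆ extHeart t d) :
    rPerpLe0 t d 𝒴 = rPerpLe0 t d (facd t d 𝒴) ∧
    rPerpLe0 t d 𝒴 = rPerp t d (facd t d 𝒴) :=
  rPerpLe0_facd_general t d 𝒴 h𝒴
end

section
/- Let D be a triangulated category with a bounded t-structure, d ≥ 1, and Y a full subcategory of D^{[-d+1,0]}. Then ^{⊥_{≤0}}Y := {Z ∈ D^{[-d+1,0]} : Hom(Z, Y[j]) = 0 for all Y ∈ Y, j ≤ 0} is a positive torsion class: it is a torsion class in D^{[-d+1,0]} and is closed under d-factors (equivalently, Hom(T, F[j]) = 0 for all j ≤ 0 where F = T^⊥). -/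
open CategoryTheory Category Limits Pretriangulated Triangulated

universe v u

variable {C : Type u} [Category.{v} C] [Preadditive C] [HasZeroObject C] [HasShift C ℤ]
  [∀ (n : ℤ), (shiftFunctor C n).Additive] [Pretriangulated C]

/-!
Write `T = ^{⊥_{≤0}}𝒴` and `F = T^⊥`. If `Z ∈ ^⊥F`, a map `Z → Y[j]` factors through
`τ_{≤0}(Y[j])`, which lies in `F`; hence `T` is a torsion class. Positivity `Hom(T, F[j]) = 0`
follows by descending induction on `j ≤ 0`, since for `X ∈ T` the truncation `τ_{≥1-d}(X[1])` is
again in `T` and `X[1] → F[j+1]` factors through it. For a `d`-factor `Z = Z_0` with chain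
`Z_i → X_i → Z_{i-1}`, one shows `Hom(Z_i, 𝒴[m]) = 0` for `m ≤ -i` by descending induction on `i`:
at `i = d` this holds for degree reasons, and each triangle passes it from `Z_{i+1}` to `Z_i`.
-/

lemma forall_shift_one_hom_eq_zero_iff {D : Type*} [Category D] [Preadditive D] [HasShift D ℤ]
    [∀ n : ℤ, (shiftFunctor D n).Additive] {X Y : D} (m : ℤ) :
    (∀ g : X⟦(1 : ℤ)⟧ ⟶ Y⟦m⟧, g = 0) ↔ ∀ g : X ⟶ Y⟦m - 1⟧, g = 0 := by
  let e := (shiftFunctorAdd' D (m - 1) 1 m (by omega)).app Y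
  refine ⟨fun h f => ?_, fun h g => ?_⟩
  · rw [← (shiftFunctor D (1 : ℤ)).map_eq_zero_iff, ← cancel_mono e.inv, zero_comp]
    exact h _
  · obtain ⟨f, hf⟩ := (shiftFunctor D (1 : ℤ)).map_surjective (g ≫ e.hom)
    rw [← cancel_mono e.hom, zero_comp, ← hf, h f, Functor.map_zero]

namespace CategoryTheory.Triangulated.TStructure

variable (t : TStructure C) (d : ℕ) {𝒴 : Set C}

lemma truncLE_zero_shift_mem_rPerp (h𝒴 : 𝒴 ⊆ extHeart t d) {Y : C} (hY : Y ∈ 𝒴) {j : ℤ}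
    (hj : j ≤ 0) {A B : C} (hA : t.le 0 A) (hB : t.ge 1 B) (u : A ⟶ Y⟦j⟧) (v : Y⟦j⟧ ⟶ B)
    (w : B ⟶ A⟦(1 : ℤ)⟧) (hT : Triangle.mk u v w ∈ distTriang C) :
    A ∈ rPerp t d (lPerpLe0 t d 𝒴) := by
  have hT' := inv_rot_of_distTriang _ hT
  have hB' : t.ge 2 (B⟦(-1 : ℤ)⟧) := t.ge_shift 1 (-1) 2 (by omega) B hB
  have hA_ge : t.ge (1 - d) A := by
    refine (t.isGE₂ _ hT' (1 - d) ⟨t.ge_antitone (by omega) _ hB'⟩ ⟨?_⟩).ge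
    exact t.ge_antitone (by omega) _ (t.ge_shift (1 - d) j (1 - d - j) (by omega) Y (h𝒴 hY).2)
  refine ⟨⟨hA, hA_ge⟩, fun X hX g => ?_⟩
  obtain ⟨g', rfl⟩ := Triangle.coyoneda_exact₂ _ hT' g (hX.2 Y hY j hj (g ≫ u))
  rw [t.zero_of_isLE_of_isGE g' 0 2 (by omega) ⟨hX.1.1⟩ ⟨hB'⟩]
  exact zero_comp

lemma lPerp_rPerp_lPerpLe0_subset (h𝒴 : 𝒴 ⊆ extHeart t d) :
    lPerp t d (rPerp t d (lPerpLe0 t d 𝒴)) ⊆ lPerpLe0 t d 𝒴 := by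
  rintro Z ⟨hZ, hZ_orth⟩
  refine ⟨hZ, fun Y hY j hj f => ?_⟩
  obtain ⟨A, B, hA, hB, u, v, w, hT⟩ := t.exists_triangle (Y⟦j⟧) 0 1 rfl
  obtain ⟨f', rfl⟩ := Triangle.coyoneda_exact₂ _ hT f
    (t.zero_of_isLE_of_isGE (f ≫ v) 0 1 (by omega) ⟨hZ.1⟩ ⟨hB⟩)
  rw [hZ_orth A (t.truncLE_zero_shift_mem_rPerp d h𝒴 hY hj hA hB u v w hT) f']
  exact zero_comp

lemma truncGE_shift_one_mem_lPerpLe0 (h𝒴 : 𝒴 ⊆ extHeart t d) {X : C}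
    (hX : X ∈ lPerpLe0 t d 𝒴) {A B : C} (hA : t.le (-d) A) (hB : t.ge (1 - d) B)
    (u : A ⟶ X⟦(1 : ℤ)⟧) (v : X⟦(1 : ℤ)⟧ ⟶ B) (w : B ⟶ A⟦(1 : ℤ)⟧)
    (hT : Triangle.mk u v w ∈ distTriang C) :
    B ∈ lPerpLe0 t d 𝒴 := by
  have hA' : t.le (-d - 1) (A⟦(1 : ℤ)⟧) := t.le_shift (-d) 1 (-d - 1) (by omega) A hA
  have hB_le : t.le 0 B := by
    refine (t.isLE₂ _ (rot_of_distTriang _ hT) 0 ⟨?_⟩ ⟨t.le_monotone (by omega) _ hA'⟩).le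
    exact t.le_monotone (by omega) _ (t.le_shift 0 1 (-1) (by omega) X hX.1.1)
  refine ⟨⟨hB_le, hB⟩, fun Y hY m hm g => ?_⟩
  obtain ⟨e, rfl⟩ := Triangle.yoneda_exact₃ _ hT g
    ((forall_shift_one_hom_eq_zero_iff m).2 (hX.2 Y hY (m - 1) (by omega)) (v ≫ g))
  have hY' : t.ge (1 - d - m) (Y⟦m⟧) := t.ge_shift (1 - d) m (1 - d - m) (by omega) Y (h𝒴 hY).2
  rw [t.zero_of_isLE_of_isGE e (-d - 1) (1 - d - m) (by omega) ⟨hA'⟩ ⟨hY'⟩]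
  exact comp_zero

lemma lPerpLe0_hom_rPerp_shift_eq_zero (h𝒴 : 𝒴 ⊆ extHeart t d) {j : ℤ} (hj : j ≤ 0) :
    ∀ X ∈ lPerpLe0 t d 𝒴, ∀ Y ∈ rPerp t d (lPerpLe0 t d 𝒴), ∀ f : X ⟶ Y⟦j⟧, f = 0 := by
  induction j, hj using Int.leInductionDown with
  | base =>
    intro X hX Y hY f
    rw [← cancel_mono ((shiftFunctorZero C ℤ).hom.app Y), zero_comp]
    exact hY.2 X hX _
  | pred n hn ih =>
    intro X hX Y hY
    obtain ⟨A, B, hA, hB, u, v, w, hT⟩ := t.exists_triangle (X⟦(1 : ℤ)⟧) (-d) (1 - d) (by omega)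
    have hB_mem := t.truncGE_shift_one_mem_lPerpLe0 d h𝒴 hX hA hB u v w hT
    refine (forall_shift_one_hom_eq_zero_iff n).1 fun g => ?_
    have hY' : t.ge (1 - d - n) (Y⟦n⟧) := t.ge_shift (1 - d) n (1 - d - n) (by omega) Y hY.1.2
    obtain ⟨g', rfl⟩ := Triangle.yoneda_exact₂ _ hT g
      (t.zero_of_isLE_of_isGE (u ≫ g) (-d) (1 - d - n) (by omega) ⟨hA⟩ ⟨hY'⟩)
    rw [ih B hB_mem Y hY g']
    exact comp_zero

lemma lPerpLe0_closedUnderDFactors (h𝒴 : 𝒴 ⊆ extHeart t d) :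
    ClosedUnderDFactors t d (lPerpLe0 t d 𝒴) := by
  rintro Z ⟨hZ, Zc, Xc, rfl, hchain⟩
  have hZc_le : ∀ i ≤ d, t.le 0 (Zc i) := by
    rintro (_ | i) hi
    · exact hZ.1
    · exact (hchain (i + 1) (by omega) hi).1.1
  have hvanish : ∀ i ≤ d, ∀ Y ∈ 𝒴, ∀ m : ℤ, m ≤ -i → ∀ g : Zc i ⟶ Y⟦m⟧, g = 0 := by
    intro i hi
    induction hi using Nat.decreasingInduction with
    | self =>
      intro Y hY m hm g
      exact t.zero_of_isLE_of_isGE g 0 (1 - d - m) (by omega) ⟨hZc_le d le_rfl⟩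
        ⟨t.ge_shift (1 - d) m (1 - d - m) (by omega) Y (h𝒴 hY).2⟩
    | of_succ i hi ih =>
      intro Y hY m hm g
      obtain ⟨-, hX, u, v, w, hT⟩ := hchain (i + 1) (by omega) hi
      obtain ⟨e, rfl⟩ := Triangle.yoneda_exact₃ _ hT g (hX.2 Y hY m (by omega) (v ≫ g))
      rw [(forall_shift_one_hom_eq_zero_iff m).2 (ih Y hY (m - 1) (by push_cast; omega)) e]
      exact comp_zero
  exact ⟨hZ, fun Y hY j hj => hvanish 0 d.zero_le Y hY j (by simpa using hj)⟩

end CategoryTheory.Triangulated.TStructure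

theorem lPerpLe0_is_positive_torsion_class_general (t : TStructure C) (d : ℕ) (𝒴 : Set C)
    (h𝒴 : 𝒴 ⊆ extHeart t d) :
    IsPositiveTorsionPair t d (lPerpLe0 t d 𝒴) (rPerp t d (lPerpLe0 t d 𝒴)) ∧
    ClosedUnderDFactors t d (lPerpLe0 t d 𝒴) := by
  have hT : lPerpLe0 t d 𝒴 = lPerp t d (rPerp t d (lPerpLe0 t d 𝒴)) :=
    Set.Subset.antisymm (fun Z hZ => ⟨hZ.1, fun Y hY f => hY.2 Z hZ f⟩)
      (t.lPerp_rPerp_lPerpLe0_subset d h𝒴)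
  refine ⟨⟨⟨fun Z hZ => hZ.1, fun Z hZ => hZ.1, hT, rfl⟩, ?_⟩,
    t.lPerpLe0_closedUnderDFactors d h𝒴⟩
  intro X hX Y hY j hj
  exact t.lPerpLe0_hom_rPerp_shift_eq_zero d h𝒴 hj X hX Y hY

/-- **(Proposition, `^{⊥_{≤0}}𝒴` is a positive torsion class.)** For any subcategory
`𝒴` of `D^{[-d+1,0]}`, the subcategory `^{⊥_{≤0}}𝒴` is a positive torsion class: it is
a torsion class in `D^{[-d+1,0]}`, it is closed under `d`-factors, and
`Hom(T, F[j]) = 0` for all `j ≤ 0` where `T = ^{⊥_{≤0}}𝒴` and `F = T^⊥`. -/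
theorem lPerpLe0_is_positive_torsion_class (t : TStructure C) (hb : IsBoundedTStr t)
    (d : ℕ) (hd : 1 ≤ d) (𝒴 : Set C) (h𝒴 : 𝒴 ⊆ extHeart t d) :
    IsPositiveTorsionPair t d (lPerpLe0 t d 𝒴) (rPerp t d (lPerpLe0 t d 𝒴)) ∧
    ClosedUnderDFactors t d (lPerpLe0 t d 𝒴) :=
  lPerpLe0_is_positive_torsion_class_general t d 𝒴 h𝒴
end

section
/- Let D be a triangulated category with a bounded t-structure and d ≥ 1. Let T be an s-torsion class and T' a positive torsion class in D^{[-d+1,0]}. If T ∩ (T')^⊥ = 0 and T' ⊆ T, then T = T'. -/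
open CategoryTheory Category Limits Pretriangulated Triangulated

universe v u

variable {C : Type u} [Category.{v} C] [Preadditive C] [HasZeroObject C] [HasShift C ℤ]
  [∀ (n : ℤ), (shiftFunctor C n).Additive] [Pretriangulated C]

/-
Let `F = T^⊥` and `F' = T'^⊥`. It suffices to show `F' ⊆ F`, since then
`T ⊆ ^⊥F ⊆ ^⊥F' = T'`, the last equality because `T'` is a torsion class.
Given `Y ∈ F'`, decompose it by the `s`-torsion pair as `X → Y → Y₀ → X[1]` with `X ∈ T`
and `Y₀ ∈ F`. Since `Hom(T', Y) = 0` and `Hom(T', Y₀[-1]) = 0` (as `T' ⊆ T`), the long exact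
Hom sequence gives `X ∈ F'`, so `X ∈ T ∩ F' = 0`. Hence `Y ≅ Y₀ ∈ F`.
-/

lemma hom_to_obj₁_eq_zero_of_distTriang {A X Y Z : C} {f : X ⟶ Y} {g : Y ⟶ Z}
    {h : Z ⟶ X⟦(1 : ℤ)⟧} (hdt : Triangle.mk f g h ∈ distTriang C)
    (hY : ∀ u : A ⟶ Y, u = 0) (hZ : ∀ u : A ⟶ Z⟦(-1 : ℤ)⟧, u = 0) (k : A ⟶ X) : k = 0 := by
  obtain ⟨e, rfl⟩ := Triangle.coyoneda_exact₂ _ (inv_rot_of_distTriang _ hdt) k (hY _)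
  rw [hZ e]
  exact zero_comp

lemma hom_to_obj₂_eq_zero_of_isZero_obj₁ {A X Y Z : C} {f : X ⟶ Y}
    {g : Y ⟶ Z} {h : Z ⟶ X⟦(1 : ℤ)⟧} (hdt : Triangle.mk f g h ∈ distTriang C)
    (hX : IsZero X) (k : A ⟶ Y) (hk : k ≫ g = 0) : k = 0 := by
  have : IsIso g := (Triangle.isZero₁_iff_isIso₂ _ hdt).1 hX
  rwa [← cancel_mono g, zero_comp]

lemma subset_lPerp_rPerp (t : TStructure C) (d : ℕ) {S : Set C} (hS : S ⊆ extHeart t d) :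
    S ⊆ lPerp t d (rPerp t d S) :=
  fun X hX => ⟨hS hX, fun _ hY f => hY.2 X hX f⟩

lemma lPerp_anti (t : TStructure C) (d : ℕ) {S S' : Set C} (h : S ⊆ S') :
    lPerp t d S' ⊆ lPerp t d S :=
  fun _ hX => ⟨hX.1, fun Y hY f => hX.2 Y (h hY) f⟩

lemma rPerp_subset_rPerp_of_inter_zero (t : TStructure C) (d : ℕ) {T T' : Set C}
    (hT : IsSTorsionPair t d T (rPerp t d T)) (hsub : T' ⊆ T)
    (hzero : ∀ Z : C, Z ∈ T → Z ∈ rPerp t d T' → IsZero Z) :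
    rPerp t d T' ⊆ rPerp t d T := by
  obtain ⟨hTe, -, hdec, -, hTFm1⟩ := hT
  intro Y hY
  obtain ⟨X, hX, Y₀, hY₀, f, g, h, hdt⟩ := hdec Y hY.1
  have hXperp : X ∈ rPerp t d T' := ⟨hTe hX, fun W hW k =>
    hom_to_obj₁_eq_zero_of_distTriang hdt (hY.2 W hW) (hTFm1 W (hsub hW) Y₀ hY₀) k⟩
  exact ⟨hY.1, fun W hW k =>
    hom_to_obj₂_eq_zero_of_isZero_obj₁ hdt (hzero X hX hXperp) k (hY₀.2 W hW _)⟩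

theorem sTorsion_eq_of_inter_zero_general (t : TStructure C)
    (d : ℕ) (T T' : Set C)
    (hT : IsSTorsionPair t d T (rPerp t d T))
    (hT' : IsPositiveTorsionPair t d T' (rPerp t d T'))
    (hzero : ∀ Z : C, Z ∈ T → Z ∈ rPerp t d T' → IsZero Z)
    (hsub : T' ⊆ T) :
    T = T' := by
  refine Set.Subset.antisymm ?_ hsub
  calc T ⊆ lPerp t d (rPerp t d T) := subset_lPerp_rPerp t d hT.1
    _ ⊆ lPerp t d (rPerp t d T') :=
      lPerp_anti t d (rPerp_subset_rPerp_of_inter_zero t d hT hsub hzero)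
    _ = T' := hT'.1.2.2.1.symm

/-- **(Lemma, no torsion class strictly in between.)** Let `T` be an `s`-torsion class
and `T'` a positive torsion class in `D^{[-d+1,0]}`. If `T ∩ (T')^⊥ = 0` and `T' ⊆ T`,
then `T = T'`. -/
theorem sTorsion_eq_of_inter_zero (t : TStructure C) (hb : IsBoundedTStr t)
    (d : ℕ) (hd : 1 ≤ d) (T T' : Set C)
    (hT : IsSTorsionPair t d T (rPerp t d T))
    (hT' : IsPositiveTorsionPair t d T' (rPerp t d T'))
    (hzero : ∀ Z : C, Z ∈ T → Z ∈ rPerp t d T' → IsZero Z)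
    (hsub : T' ⊆ T) :
    T = T' :=
  sTorsion_eq_of_inter_zero_general t d T T' hT hT' hzero hsub
end
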